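/- arXiv:2406.12541 — 8 statements merged into one kernel-verified Lean document; each statement's English description precedes it below -/
import Mathlib

section
/- Assume the inf-sup condition: there is c_is > 0 such that sup_{w ∈ H(A*), ‖w‖_{A*}=1} (A*w, v) ≥ c_is ‖v‖ for all v ∈ L²(Ω). Then the bilinear form b(w; v, φ) := (A*w, v)_𝒯 + ⟨φ, w⟩_𝒮 on H̃(A*,𝒯) × (L²(Ω) × H₀(A,𝒮)) satisfies the inf-sup property: there is C > 0, independent of the mesh 𝒯, such that sup_{w ∈ H̃(A*,𝒯), ‖w‖_{A*,𝒯}=1} b(w; v, φ) ≥ C(‖v‖ + ‖φ‖_{A,𝒮}) for all v ∈ L²(Ω), φ ∈ H₀(A,𝒮). -/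
open scoped RealInnerProductSpace

noncomputable section

/-- The skeleton trace pairing `eS iA AT iAs AsT v w = ⟨tr^{A*}_𝒮 w, v⟩_𝒮
  = (A*w, v) − (w, A_𝒯 v)`; one has `⟨tr^A_𝒮 v, w⟩_𝒮 = - eS iA AT iAs AsT v w`. -/
def eS {H HU VA VAs : Type*}
    [NormedAddCommGroup H] [InnerProductSpace ℝ H]
    [NormedAddCommGroup HU] [InnerProductSpace ℝ HU]
    [NormedAddCommGroup VA] [InnerProductSpace ℝ VA]
    [NormedAddCommGroup VAs] [InnerProductSpace ℝ VAs]
    (iA : VA →L[ℝ] H) (AT : VA →L[ℝ] HU)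
    (iAs : VAs →L[ℝ] HU) (AsT : VAs →L[ℝ] H)
    (v : VA) (w : VAs) : ℝ :=
  ⟪AsT w, iA v⟫ - ⟪iAs w, AT v⟫

/- STATEMENT 3 (Lemma 4.3: mixed inf-sup property of the hybrid bilinear form).
Abstract hybrid framework: `H = L²(Ω)`, `HU = L²(Ω;U)`; `VA = H(A,𝒯)`,
`VAs = H(A*,𝒯)` (broken graph spaces, whose Hilbert norms are the broken graph
norms, cf. `normVAs`); `HA = H(A)`, `HAs = H(A*)`, `HtAs = H̃(A*,𝒯)` with
`H(A*) ⊆ H̃(A*,𝒯) ⊆ H(A*,𝒯)`.  A functional `φ ∈ H₀(A,𝒮)` is represented as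
`φ = tr^A_𝒮 v0` with `v0 ∈ H₀(A)`, `⟨φ, w⟩_𝒮 = - eS v0 w`, and its norm
`‖φ‖_{A,𝒮}` is the minimum-extension norm (an `sInf` below).
Hypotheses: the continuous inf-sup condition (2.4b) for `A*` on `H(A*)` with
constant `c_is`; the kernel characterization of Lemma 4.2 (`hker`) and the
trace-norm identity of Lemma 4.1 (`htr`).
Conclusion: the bilinear form `b(w; v, φ) = (A*w, v)_𝒯 + ⟨φ, w⟩_𝒮` on
`H̃(A*,𝒯) × (L²(Ω) × H₀(A,𝒮))` satisfies the inf-sup property with a constant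
`C > 0` (depending only on `c_is`, hence independent of the mesh `𝒯`). -/
theorem hybrid_mixed_infsup
    {H HU VA VAs : Type*}
    [NormedAddCommGroup H] [InnerProductSpace ℝ H]
    [NormedAddCommGroup HU] [InnerProductSpace ℝ HU]
    [NormedAddCommGroup VA] [InnerProductSpace ℝ VA]
    [NormedAddCommGroup VAs] [InnerProductSpace ℝ VAs]
    (iA : VA →L[ℝ] H) (AT : VA →L[ℝ] HU)
    (iAs : VAs →L[ℝ] HU) (AsT : VAs →L[ℝ] H)
    (normVAs : ∀ w : VAs, ‖w‖ ^ 2 = ‖iAs w‖ ^ 2 + ‖AsT w‖ ^ 2)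
    (HA : Submodule ℝ VA) (HAs : Submodule ℝ VAs) (HtAs : Submodule ℝ VAs)
    (hsubs : HAs ≤ HtAs)
    (c_is : ℝ) (hcis : 0 < c_is)
    -- continuous inf-sup condition for A* on H(A*)
    (hinfsup : ∀ g : H,
      c_is * ‖g‖ ≤ sSup {r : ℝ | ∃ w ∈ HAs, ‖w‖ = 1 ∧ r = ⟪AsT w, g⟫})
    -- Lemma 4.2: H(A*) = {w ∈ H̃(A*,𝒯) : ⟨φ, w⟩_𝒮 = 0 ∀ φ ∈ H₀(A,𝒮)}
    (hker : ∀ w ∈ HtAs,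
      ((∀ v0 : VA, v0 ∈ HA → (∀ w' ∈ HAs, eS iA AT iAs AsT v0 w' = 0) →
          eS iA AT iAs AsT v0 w = 0) ↔ w ∈ HAs))
    -- Lemma 4.1: minimum-extension norm = dual norm w.r.t. H̃(A*,𝒯)
    (htr : ∀ v0 : VA, v0 ∈ HA → (∀ w ∈ HAs, eS iA AT iAs AsT v0 w = 0) →
      sInf {r : ℝ | ∃ v ∈ HA,
          (∀ w ∈ HtAs, eS iA AT iAs AsT v w = eS iA AT iAs AsT v0 w) ∧ r = ‖v‖}
        = sSup {r : ℝ | ∃ w ∈ HtAs, ‖w‖ = 1 ∧ r = - eS iA AT iAs AsT v0 w}) :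
    ∃ C > 0, ∀ (g : H) (v0 : VA),
      v0 ∈ HA → (∀ w ∈ HAs, eS iA AT iAs AsT v0 w = 0) →
      C * (‖g‖ + sInf {r : ℝ | ∃ v ∈ HA,
              (∀ w ∈ HtAs, eS iA AT iAs AsT v w = eS iA AT iAs AsT v0 w) ∧ r = ‖v‖})
        ≤ sSup {r : ℝ | ∃ w ∈ HtAs, ‖w‖ = 1 ∧
              r = ⟪AsT w, g⟫ - eS iA AT iAs AsT v0 w} := by

  refine ⟨c_is / (c_is + 2), by positivity, ?_⟩
  intro g v0 hv0 hzero
  rw [htr v0 hv0 hzero]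
  set Sset : Set ℝ := {r : ℝ | ∃ w ∈ HtAs, ‖w‖ = 1 ∧
      r = ⟪AsT w, g⟫ - eS iA AT iAs AsT v0 w} with hSdef
  set Tset : Set ℝ := {r : ℝ | ∃ w ∈ HtAs, ‖w‖ = 1 ∧
      r = - eS iA AT iAs AsT v0 w} with hTdef
  by_cases hex : ∃ w ∈ HtAs, ‖w‖ = 1
  · obtain ⟨w₁, hw₁, hnw₁⟩ := hex
    have hnorms : ∀ w : VAs, ‖w‖ = 1 → ‖AsT w‖ ≤ 1 ∧ ‖iAs w‖ ≤ 1 := by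
      intro w hw
      have h := normVAs w
      rw [hw] at h
      constructor <;> nlinarith [norm_nonneg (AsT w), norm_nonneg (iAs w)]
    have hbdd : BddAbove Sset := by
      refine ⟨‖g‖ + ‖iA v0‖ + ‖AT v0‖, ?_⟩
      rintro r ⟨w, hw, hnw, rfl⟩
      obtain ⟨h1, h2⟩ := hnorms w hnw
      have i1 := real_inner_le_norm (AsT w) g
      have i2 := abs_le.mp (abs_real_inner_le_norm (AsT w) (iA v0))
      have i3 := abs_le.mp (abs_real_inner_le_norm (iAs w) (AT v0))
      have n1 := norm_nonneg g
      have n2 := norm_nonneg (iA v0)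
      have n3 := norm_nonneg (AT v0)
      have n4 := norm_nonneg (AsT w)
      have n5 := norm_nonneg (iAs w)
      unfold eS
      nlinarith [mul_le_of_le_one_left n1 h1, mul_le_of_le_one_left n2 h1,
        mul_le_of_le_one_left n3 h2]
    have hmem1 : (⟪AsT w₁, g⟫ - eS iA AT iAs AsT v0 w₁) ∈ Sset :=
      ⟨w₁, hw₁, hnw₁, rfl⟩
    have hmem2 : -(⟪AsT w₁, g⟫ - eS iA AT iAs AsT v0 w₁) ∈ Sset := by
      refine ⟨-w₁, neg_mem hw₁, by simpa using hnw₁, ?_⟩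
      simp [eS, inner_neg_left]
      ring
    have hS0 : 0 ≤ sSup Sset := by
      have a1 := le_csSup hbdd hmem1
      have a2 := le_csSup hbdd hmem2
      linarith
    -- step 1 : c_is * ‖g‖ ≤ sSup Sset
    have hg : c_is * ‖g‖ ≤ sSup Sset := by
      refine le_trans (hinfsup g) (Real.sSup_le ?_ hS0)
      rintro r ⟨w, hw, hnw, rfl⟩
      have : (⟪AsT w, g⟫ : ℝ) ∈ Sset := by
        refine ⟨w, hsubs hw, hnw, ?_⟩
        rw [hzero w hw]
        ring
      exact le_csSup hbdd this
    -- step 2 : sSup Tset ≤ sSup Sset + ‖g‖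
    have hT : sSup Tset ≤ sSup Sset + ‖g‖ := by
      refine Real.sSup_le ?_ (by linarith [norm_nonneg g])
      rintro r ⟨w, hw, hnw, rfl⟩
      have hmem : (⟪AsT w, g⟫ - eS iA AT iAs AsT v0 w) ∈ Sset := ⟨w, hw, hnw, rfl⟩
      have h1 := le_csSup hbdd hmem
      have h2 := abs_le.mp (abs_real_inner_le_norm (AsT w) g)
      have h3 := (hnorms w hnw).1
      have := mul_le_of_le_one_left (norm_nonneg g) h3
      linarith
    have hC : c_is * (‖g‖ + sSup Tset) ≤ (c_is + 2) * sSup Sset := by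
      nlinarith
    rw [div_mul_eq_mul_div, div_le_iff₀ (by positivity)]
    nlinarith
  · -- degenerate case : no unit vectors in HtAs
    push_neg at hex
    have hSempty : Sset = ∅ := by
      ext r
      simp only [hSdef, Set.mem_setOf_eq, Set.mem_empty_iff_false, iff_false]
      rintro ⟨w, hw, hnw, -⟩
      exact absurd hnw (hex w hw)
    have hTempty : Tset = ∅ := by
      ext r
      simp only [hTdef, Set.mem_setOf_eq, Set.mem_empty_iff_false, iff_false]
      rintro ⟨w, hw, hnw, -⟩
      exact absurd hnw (hex w hw)
    have hAempty : {r : ℝ | ∃ w ∈ HAs, ‖w‖ = 1 ∧ r = ⟪AsT w, g⟫} = ∅ := by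
      ext r
      simp only [Set.mem_setOf_eq, Set.mem_empty_iff_false, iff_false]
      rintro ⟨w, hw, hnw, -⟩
      exact absurd hnw (hex w (hsubs hw))
    have hg0 : ‖g‖ = 0 := by
      have := hinfsup g
      rw [hAempty, Real.sSup_empty] at this
      nlinarith [norm_nonneg g]
    rw [hSempty, hTempty, Real.sSup_empty, hg0]
    simp

end
end

section
/- Assume the Poincaré–Friedrichs inequality ‖v‖ ≤ C_PF ‖Av‖ for all v ∈ H₀(A). Then the generalized primal hybrid formulation — find u ∈ H̃(A,𝒯) and ψ ∈ H(A*,𝒮) such that (𝒞Au, Aδu)_𝒯 + ⟨ψ, δu⟩_𝒮 = (f, δu) for all δu ∈ H̃(A,𝒯) and ⟨δψ, u⟩_𝒮 = 0 for all δψ ∈ H(A*,𝒮) — is well posed for every f ∈ L²(Ω): it has a unique solution (u, ψ) satisfying ‖u‖_{A,𝒯} + ‖ψ‖_{A*,𝒮} ≤ C‖f‖ with C independent of f and 𝒯. Moreover u ∈ H₀(A), ψ = tr^{A*}_𝒮(𝒞Au), and A*𝒞Au = f. -/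
open scoped RealInnerProductSpace

noncomputable section

theorem eS_def' {H HU VA VAs : Type*}
    [NormedAddCommGroup H] [InnerProductSpace ℝ H]
    [NormedAddCommGroup HU] [InnerProductSpace ℝ HU]
    [NormedAddCommGroup VA] [InnerProductSpace ℝ VA]
    [NormedAddCommGroup VAs] [InnerProductSpace ℝ VAs]
    (iA : VA →L[ℝ] H) (AT : VA →L[ℝ] HU)
    (iAs : VAs →L[ℝ] HU) (AsT : VAs →L[ℝ] H)
    (v : VA) (w : VAs) :
    eS iA AT iAs AsT v w = ⟪AsT w, iA v⟫ - ⟪iAs w, AT v⟫ := rfl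

/- STATEMENT 4 (Theorem 2.1: well-posedness of the generalized primal hybrid
formulation).  Abstract hybrid framework: `H = L²(Ω)`, `HU = L²(Ω;U)`;
`VA = H(A,𝒯)` with broken graph norm (`normVA`), embedding `iA`, piecewise
operator `AT = A_𝒯`; `VAs = H(A*,𝒯)` likewise; `HA = H(A)`, `HAs = H(A*)`,
`HtA = H̃(A,𝒯)` closed with `H₀(A) ⊆ H̃(A,𝒯) ⊆ H(A,𝒯)` (`hsub`).
`H₀(A)` membership is `v ∈ HA ∧ ∀ w ∈ HAs, eS v w = 0`.
A trace `ψ ∈ H(A*,𝒮)` is represented by `w0 ∈ H(A*)` via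
`⟨ψ, δu⟩_𝒮 = eS δu w0`, with minimum-extension norm `‖ψ‖_{A*,𝒮}` (an `sInf`).
`C𝒞` is the symmetric uniformly positive definite coefficient tensor `𝒞`.
Hypotheses: Poincaré–Friedrichs on `H₀(A)` (`hPF`, assumption (2.4a)) and the
closedness/adjointness of the pair `(A, A*)` (`hmaxA`, `hmaxAs`).
Conclusion: for every `f ∈ L²(Ω)` the problem (2.7) has a unique solution
`(u, ψ)` with `‖u‖_{A,𝒯} + ‖ψ‖_{A*,𝒮} ≤ C ‖f‖`, `C` independent of `f` (and of
the mesh: it depends only on `C_PF` and `𝒞`); moreover `u ∈ H₀(A)`,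
`ψ = tr^{A*}_𝒮(𝒞 A u)` and `A*𝒞Au = f`, i.e. `u` solves (2.1). -/
set_option maxHeartbeats 2000000 in
theorem generalized_primal_hybrid_wellposed
    {H HU VA VAs : Type*}
    [NormedAddCommGroup H] [InnerProductSpace ℝ H] [CompleteSpace H]
    [NormedAddCommGroup HU] [InnerProductSpace ℝ HU] [CompleteSpace HU]
    [NormedAddCommGroup VA] [InnerProductSpace ℝ VA] [CompleteSpace VA]
    [NormedAddCommGroup VAs] [InnerProductSpace ℝ VAs] [CompleteSpace VAs]
    (iA : VA →L[ℝ] H) (AT : VA →L[ℝ] HU)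
    (iAs : VAs →L[ℝ] HU) (AsT : VAs →L[ℝ] H)
    (normVA : ∀ v : VA, ‖v‖ ^ 2 = ‖iA v‖ ^ 2 + ‖AT v‖ ^ 2)
    (normVAs : ∀ w : VAs, ‖w‖ ^ 2 = ‖iAs w‖ ^ 2 + ‖AsT w‖ ^ 2)
    (HA : Submodule ℝ VA) (hHAcl : IsClosed (HA : Set VA))
    (HAs : Submodule ℝ VAs) (hHAscl : IsClosed (HAs : Set VAs))
    (HtA : Submodule ℝ VA) (hHtAcl : IsClosed (HtA : Set VA))
    -- H₀(A) ⊆ H̃(A,𝒯)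
    (hsub : ∀ v ∈ HA, (∀ w ∈ HAs, eS iA AT iAs AsT v w = 0) → v ∈ HtA)
    -- 𝒞 : symmetric, uniformly positive definite, bounded coefficient tensor
    (C𝒞 : HU →L[ℝ] HU) (hCsym : ∀ x y : HU, ⟪C𝒞 x, y⟫ = ⟪x, C𝒞 y⟫)
    (c𝒞 : ℝ) (hc𝒞 : 0 < c𝒞) (hCcoer : ∀ x : HU, c𝒞 * ‖x‖ ^ 2 ≤ ⟪C𝒞 x, x⟫)
    -- Poincaré–Friedrichs inequality on H₀(A)  (assumption (2.4a))
    (CPF : ℝ) (hCPF : 0 < CPF)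
    (hPF : ∀ v : VA, v ∈ HA → (∀ w ∈ HAs, eS iA AT iAs AsT v w = 0) →
      ‖iA v‖ ≤ CPF * ‖AT v‖)
    -- A closed densely defined: distributional characterization of H₀(A)
    (hmaxA : ∀ v ∈ HtA, (∀ w ∈ HAs, eS iA AT iAs AsT v w = 0) → v ∈ HA)
    -- A* is the (maximal) adjoint of A restricted to H₀(A)
    (hmaxAs : ∀ (z : HU) (g : H),
      (∀ v : VA, v ∈ HA → (∀ w ∈ HAs, eS iA AT iAs AsT v w = 0) →
        ⟪z, AT v⟫ = ⟪g, iA v⟫) →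
      ∃ w ∈ HAs, iAs w = z ∧ AsT w = g) :
    ∃ C > 0, ∀ f : H,
      ∃ (u : VA) (w0 : VAs), u ∈ HtA ∧ w0 ∈ HAs ∧
        -- equation (2.7a): (𝒞Au, Aδu)_𝒯 + ⟨ψ, δu⟩_𝒮 = (f, δu) for δu ∈ H̃(A,𝒯)
        (∀ δu ∈ HtA, ⟪C𝒞 (AT u), AT δu⟫ + eS iA AT iAs AsT δu w0 = ⟪f, iA δu⟫) ∧
        -- equation (2.7b): ⟨δψ, u⟩_𝒮 = 0 for all δψ ∈ H(A*,𝒮)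
        (∀ w ∈ HAs, eS iA AT iAs AsT u w = 0) ∧
        -- uniqueness of the solution (u, ψ)
        (∀ (u' : VA) (w0' : VAs), u' ∈ HtA → w0' ∈ HAs →
          (∀ δu ∈ HtA, ⟪C𝒞 (AT u'), AT δu⟫ + eS iA AT iAs AsT δu w0' = ⟪f, iA δu⟫) →
          (∀ w ∈ HAs, eS iA AT iAs AsT u' w = 0) →
          u' = u ∧ ∀ δu ∈ HtA, eS iA AT iAs AsT δu w0' = eS iA AT iAs AsT δu w0) ∧
        -- a priori bound:  ‖u‖_{A,𝒯} + ‖ψ‖_{A*,𝒮} ≤ C ‖f‖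
        ‖u‖ + sInf {r : ℝ | ∃ w ∈ HAs,
            (∀ v ∈ HtA, eS iA AT iAs AsT v w = eS iA AT iAs AsT v w0) ∧ r = ‖w‖}
          ≤ C * ‖f‖ ∧
        -- regularity: u ∈ H₀(A)  (membership in H(A); the trace condition is (2.7b))
        u ∈ HA ∧
        -- ψ = tr^{A*}_𝒮(𝒞Au)  and  A*𝒞Au = f
        (∃ wc ∈ HAs, iAs wc = C𝒞 (AT u) ∧ AsT wc = f ∧
          ∀ v ∈ HtA, eS iA AT iAs AsT v wc = eS iA AT iAs AsT v w0) := by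
  classical
  have eSdef : ∀ (v : VA) (w : VAs),
      eS iA AT iAs AsT v w = ⟪AsT w, iA v⟫ - ⟪iAs w, AT v⟫ :=
    eS_def' iA AT iAs AsT
  let V0 : Submodule ℝ VA :=
    { carrier := {v | v ∈ HA ∧ ∀ w ∈ HAs, eS iA AT iAs AsT v w = 0}
      add_mem' := by
        rintro a b ⟨haA, ha⟩ ⟨hbA, hb⟩
        refine ⟨HA.add_mem haA hbA, fun w hw => ?_⟩
        have h1 := ha w hw; have h2 := hb w hw
        rw [eSdef] at h1 h2 ⊢
        simp only [map_add, inner_add_right]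
        linarith
      zero_mem' := by
        refine ⟨HA.zero_mem, fun w hw => ?_⟩
        rw [eSdef]; simp
      smul_mem' := by
        rintro c a ⟨haA, ha⟩
        refine ⟨HA.smul_mem c haA, fun w hw => ?_⟩
        have h1 := ha w hw
        rw [eSdef] at h1 ⊢
        simp only [map_smul, inner_smul_right]
        linear_combination c * h1 }
  have hV0mem : ∀ v : VA, v ∈ V0 ↔
      v ∈ HA ∧ ∀ w ∈ HAs, eS iA AT iAs AsT v w = 0 := fun v => Iff.rfl
  have hV0closed : IsClosed (V0 : Set VA) := by
    have hset : (V0 : Set VA)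
        = (HA : Set VA) ∩ ⋂ w ∈ HAs, {v : VA | eS iA AT iAs AsT v w = 0} := by
      ext v
      simp only [Set.mem_inter_iff, Set.mem_iInter, Set.mem_setOf_eq, SetLike.mem_coe]
      exact hV0mem v
    rw [hset]
    refine hHAcl.inter (isClosed_biInter fun w hw => isClosed_eq ?_ continuous_const)
    simp only [eSdef]
    exact ((continuous_const.inner iA.continuous).sub
      (continuous_const.inner AT.continuous))
  haveI : CompleteSpace V0 := hV0closed.completeSpace_coe
  -- the bilinear form on V0
  let T : V0 →L[ℝ] HU := AT.comp V0.subtypeL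
  let B : V0 →L[ℝ] V0 →L[ℝ] ℝ :=
    ((((innerSL ℝ).comp (C𝒞.comp T)).flip).comp T).flip
  have hB : ∀ u v : V0, B u v = ⟪C𝒞 (AT (u : VA)), AT (v : VA)⟫ := fun u v => rfl
  -- coercivity
  set α : ℝ := c𝒞 / (1 + CPF ^ 2) with hα
  have hαpos : 0 < α := div_pos hc𝒞 (by positivity)
  have hnormsq : ∀ v : V0, ‖v‖ ^ 2 ≤ (1 + CPF ^ 2) * ‖AT (v : VA)‖ ^ 2 := by
    intro v
    have h1 := normVA (v : VA)
    have h2 := hPF (v : VA) v.2.1 v.2.2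
    have h3 : ‖v‖ = ‖(v : VA)‖ := rfl
    have h4 : (0 : ℝ) ≤ ‖iA (v : VA)‖ := norm_nonneg _
    rw [h3]
    nlinarith [mul_self_le_mul_self h4 h2, norm_nonneg (AT (v : VA))]
  have hcoerineq : ∀ u : V0, α * ‖u‖ * ‖u‖ ≤ B u u := by
    intro u
    have h1 := hCcoer (AT (u : VA))
    have h2 := mul_le_mul_of_nonneg_left (hnormsq u) hαpos.le
    rw [hB]
    have h3 : α * ((1 + CPF ^ 2) * ‖AT (u : VA)‖ ^ 2) = c𝒞 * ‖AT (u : VA)‖ ^ 2 := by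
      rw [hα]; field_simp
    have h4 : α * ‖u‖ * ‖u‖ = α * ‖u‖ ^ 2 := by ring
    linarith
  have hcoer : IsCoercive B := ⟨α, hαpos, hcoerineq⟩
  -- constant
  refine ⟨(1 + ‖C𝒞‖) / α + 1, by positivity, fun f => ?_⟩
  -- solve by Lax–Milgram
  let ℓ : V0 →L[ℝ] ℝ := (innerSL ℝ f).comp (iA.comp V0.subtypeL)
  let F : V0 := (InnerProductSpace.toDual ℝ V0).symm ℓ
  let u : V0 := hcoer.continuousLinearEquivOfBilin.symm F
  have key : ∀ v : V0, B u v = ⟪f, iA (v : VA)⟫ := by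
    intro v
    have h1 : ⟪hcoer.continuousLinearEquivOfBilin u, v⟫ = B u v :=
      hcoer.continuousLinearEquivOfBilin_apply u v
    have h2 : hcoer.continuousLinearEquivOfBilin u = F :=
      hcoer.continuousLinearEquivOfBilin.apply_symm_apply F
    have h3 : ⟪F, v⟫ = ℓ v := InnerProductSpace.toDual_symm_apply
    rw [h2, h3] at h1
    exact h1.symm
  -- the Lagrange multiplier w0
  clear_value u
  obtain ⟨w0, hw0HAs, hw0i, hw0A⟩ :
      ∃ w ∈ HAs, iAs w = C𝒞 (AT (u : VA)) ∧ AsT w = f := by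
    refine hmaxAs (C𝒞 (AT (u : VA))) f fun v hvA hvtr => ?_
    exact key ⟨v, hvA, hvtr⟩
  have huHtA : (u : VA) ∈ HtA := hsub _ u.2.1 u.2.2
  have heq27a : ∀ δu ∈ HtA,
      ⟪C𝒞 (AT (u : VA)), AT δu⟫ + eS iA AT iAs AsT δu w0 = ⟪f, iA δu⟫ := by
    intro δu _
    rw [eSdef, hw0i, hw0A]; ring
  -- norm bounds
  have hiA_le : ∀ v : V0, ‖iA (v : VA)‖ ≤ ‖v‖ := by
    intro v
    have h1 := normVA (v : VA)
    have h3 : ‖v‖ = ‖(v : VA)‖ := rfl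
    nlinarith [norm_nonneg (iA (v : VA)), norm_nonneg (v : VA),
      norm_nonneg (AT (v : VA))]
  have hAT_le : ∀ v : V0, ‖AT (v : VA)‖ ≤ ‖v‖ := by
    intro v
    have h1 := normVA (v : VA)
    have h3 : ‖v‖ = ‖(v : VA)‖ := rfl
    nlinarith [norm_nonneg (iA (v : VA)), norm_nonneg (v : VA),
      norm_nonneg (AT (v : VA))]
  have hu_bd : α * ‖u‖ ≤ ‖f‖ := by
    have h1 : α * ‖u‖ * ‖u‖ ≤ B u u := hcoerineq u
    have h2 : B u u = ⟪f, iA (u : VA)⟫ := key u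
    have h3 : ⟪f, iA (u : VA)⟫ ≤ ‖f‖ * ‖iA (u : VA)‖ := real_inner_le_norm _ _
    have h4 := hiA_le u
    rcases eq_or_lt_of_le (norm_nonneg u) with h | h
    · rw [← h]; simpa using norm_nonneg f
    · have h5 : α * ‖u‖ * ‖u‖ ≤ ‖f‖ * ‖u‖ := by
        nlinarith [norm_nonneg f]
      exact le_of_mul_le_mul_right h5 h
  have hw0_bd : ‖w0‖ ≤ ‖C𝒞‖ * ‖u‖ + ‖f‖ := by
    have h1 := normVAs w0
    rw [hw0i, hw0A] at h1
    have h2 : ‖C𝒞 (AT (u : VA))‖ ≤ ‖C𝒞‖ * ‖AT (u : VA)‖ := C𝒞.le_opNorm _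
    have h3 := hAT_le u
    have h4 : (0 : ℝ) ≤ ‖C𝒞‖ := norm_nonneg _
    have ha : ‖C𝒞 (AT (u : VA))‖ ≤ ‖C𝒞‖ * ‖u‖ :=
      h2.trans (mul_le_mul_of_nonneg_left h3 h4)
    have h5 : ‖w0‖ ^ 2 ≤ (‖C𝒞‖ * ‖u‖ + ‖f‖) ^ 2 := by
      nlinarith [norm_nonneg f, norm_nonneg (C𝒞 (AT (u : VA))),
        mul_nonneg (mul_nonneg h4 (norm_nonneg u)) (norm_nonneg f),
        mul_self_le_mul_self (norm_nonneg (C𝒞 (AT (u : VA)))) ha]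
    have h6 : (0:ℝ) ≤ ‖C𝒞‖ * ‖u‖ + ‖f‖ := by positivity
    nlinarith [norm_nonneg w0]
  refine ⟨(u : VA), w0, huHtA, hw0HAs, heq27a, u.2.2, ?_, ?_, u.2.1,
    ⟨w0, hw0HAs, hw0i, hw0A, fun v _ => rfl⟩⟩
  · -- uniqueness
    intro u' w0' hu'HtA hw0'HAs heq27a' htr'
    have hu'HA : u' ∈ HA := hmaxA u' hu'HtA htr'
    have hBU' : ∀ v : V0, B ⟨u', hu'HA, htr'⟩ v = ⟪f, iA (v : VA)⟫ := by
      intro v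
      have hvHtA : (v : VA) ∈ HtA := hsub _ v.2.1 v.2.2
      have h1 := heq27a' (v : VA) hvHtA
      have h2 : eS iA AT iAs AsT (v : VA) w0' = 0 := v.2.2 w0' hw0'HAs
      rw [hB]
      rw [h2] at h1
      linarith
    have hUu : (⟨u', hu'HA, htr'⟩ : V0) = u := by
      set U' : V0 := ⟨u', hu'HA, htr'⟩ with hU'
      have hsubcoe : ((U' - u : V0) : VA) = (U' : VA) - (u : VA) := rfl
      have hzero : ∀ v : V0,
          ⟪C𝒞 (AT ((U' - u : V0) : VA)), AT (v : VA)⟫ = 0 := by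
        intro v
        have h1 := hBU' v
        have h2 := key v
        rw [hB] at h1 h2
        rw [hsubcoe, map_sub, map_sub, inner_sub_left]
        linarith
      have hdiff : B (U' - u) (U' - u) = 0 := by
        rw [hB]; exact hzero (U' - u)
      have hc := hcoerineq (U' - u)
      rw [hdiff] at hc
      have hn : ‖U' - u‖ = 0 := by
        by_contra hne
        have hpos : 0 < ‖U' - u‖ := lt_of_le_of_ne (norm_nonneg _) (Ne.symm hne)
        nlinarith [mul_pos (mul_pos hαpos hpos) hpos]
      have : U' - u = 0 := norm_eq_zero.mp hn
      exact sub_eq_zero.mp this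
    have hu'u : u' = (u : VA) := congrArg Subtype.val hUu
    refine ⟨hu'u, fun δu hδu => ?_⟩
    have h1 := heq27a' δu hδu
    have h2 := heq27a δu hδu
    rw [hu'u] at h1
    linarith
  · -- a priori bound
    have hInf : sInf {r : ℝ | ∃ w ∈ HAs,
        (∀ v ∈ HtA, eS iA AT iAs AsT v w = eS iA AT iAs AsT v w0) ∧ r = ‖w‖}
        ≤ ‖w0‖ := by
      apply csInf_le
      · refine ⟨0, fun r hr => ?_⟩
        obtain ⟨w, _, _, rfl⟩ := hr
        exact norm_nonneg w
      · exact ⟨w0, hw0HAs, fun v _ => rfl, rfl⟩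
    have hnu : ‖(u : VA)‖ = ‖u‖ := rfl
    have hufα : ‖u‖ ≤ ‖f‖ / α := (le_div_iff₀ hαpos).mpr (by nlinarith [hu_bd])
    calc ‖(u : VA)‖ + sInf {r : ℝ | ∃ w ∈ HAs,
          (∀ v ∈ HtA, eS iA AT iAs AsT v w = eS iA AT iAs AsT v w0) ∧ r = ‖w‖}
        ≤ ‖u‖ + ‖w0‖ := by rw [hnu]; linarith
      _ ≤ (1 + ‖C𝒞‖) * ‖u‖ + ‖f‖ := by nlinarith [norm_nonneg C𝒞, norm_nonneg u]
      _ ≤ (1 + ‖C𝒞‖) * (‖f‖ / α) + ‖f‖ := by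
          have h4 : (0:ℝ) ≤ 1 + ‖C𝒞‖ := by positivity
          nlinarith
      _ = ((1 + ‖C𝒞‖) / α + 1) * ‖f‖ := by field_simp

end
end

section
/- Assume (i) the Poincaré–Friedrichs inequality on H₀(A) and (ii) the inf-sup condition sup_{w∈H(A*),‖w‖_{A*}=1}(A*w,v) ≥ c_is‖v‖ for all v ∈ L²(Ω). Then the generalized mixed hybrid formulation — find w ∈ H̃(A*,𝒯), u ∈ L²(Ω), φ ∈ H₀(A,𝒮) with (𝒞⁻¹w, δw) − (u, A*δw)_𝒯 − ⟨φ, δw⟩_𝒮 = 0 for all δw ∈ H̃(A*,𝒯), and −(A*w, δu)_𝒯 − ⟨δφ, w⟩_𝒮 = −(f, δu) for all δu ∈ L²(Ω), δφ ∈ H₀(A,𝒮) — is well posed, with ‖w‖_{A*,𝒯} + ‖u‖ + ‖φ‖_{A,𝒮} ≤ C‖f‖, C independent of f and 𝒯. Moreover u ∈ H₀(A), w = 𝒞Au ∈ H(A*), φ = tr^A_𝒮(u), and A*𝒞Au = f. -/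
open scoped RealInnerProductSpace

noncomputable section

/- STATEMENT 5 (Theorem 2.4: well-posedness of the generalized mixed hybrid
formulation (2.12)).  Abstract hybrid framework: `H = L²(Ω)`, `HU = L²(Ω;U)`;
`VA = H(A,𝒯)`, `VAs = H(A*,𝒯)` broken graph spaces with graph norms;
`HA = H(A)`, `HAs = H(A*)`, `HtAs = H̃(A*,𝒯)` closed with
`H(A*) ⊆ H̃(A*,𝒯) ⊆ H(A*,𝒯)`.  `H₀(A)` membership is
`v ∈ HA ∧ ∀ w ∈ HAs, eS v w = 0`.  A trace `φ ∈ H₀(A,𝒮)` is represented by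
`u0 ∈ H₀(A)` via `⟨φ, δw⟩_𝒮 = - eS u0 δw`, with minimum-extension norm
`‖φ‖_{A,𝒮}` (an `sInf`).  `C𝒞` is the coefficient tensor `𝒞` and `Ci = 𝒞⁻¹`.
Hypotheses: Poincaré–Friedrichs (2.4a) and inf-sup (2.4b), plus the
closedness/adjointness characterizations of the pair `(A, A*)`.
Conclusion: for every `f` the problem (2.12) has a unique solution `(w,u,φ)`
with `‖w‖_{A*,𝒯} + ‖u‖ + ‖φ‖_{A,𝒮} ≤ C‖f‖`, `C` independent of `f` (and of the
mesh); moreover `u ∈ H₀(A)`, `w = 𝒞Au ∈ H(A*)`, `φ = tr^A_𝒮(u)`, `A*w = f`. -/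
section Aux
variable {H HU VA VAs : Type*}
    [NormedAddCommGroup H] [InnerProductSpace ℝ H]
    [NormedAddCommGroup HU] [InnerProductSpace ℝ HU]
    [NormedAddCommGroup VA] [InnerProductSpace ℝ VA]
    [NormedAddCommGroup VAs] [InnerProductSpace ℝ VAs]
    (iA : VA →L[ℝ] H) (AT : VA →L[ℝ] HU)
    (iAs : VAs →L[ℝ] HU) (AsT : VAs →L[ℝ] H)

lemma eS_zero_left (w : VAs) : eS iA AT iAs AsT 0 w = 0 := by simp [eS]

lemma eS_add_left (v v' : VA) (w : VAs) :
    eS iA AT iAs AsT (v + v') w = eS iA AT iAs AsT v w + eS iA AT iAs AsT v' w := by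
  simp [eS, inner_add_right]; ring

lemma eS_smul_left (c : ℝ) (v : VA) (w : VAs) :
    eS iA AT iAs AsT (c • v) w = c * eS iA AT iAs AsT v w := by
  simp [eS, inner_smul_right]; ring

lemma eS_sub_right (v : VA) (w w' : VAs) :
    eS iA AT iAs AsT v (w - w') = eS iA AT iAs AsT v w - eS iA AT iAs AsT v w' := by
  simp [eS, inner_sub_left]; ring

lemma eS_cont (w : VAs) : Continuous fun v : VA => eS iA AT iAs AsT v w := by
  apply Continuous.sub
  · exact Continuous.inner continuous_const (iA.continuous)
  · exact Continuous.inner continuous_const (AT.continuous)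

end Aux

set_option maxHeartbeats 1600000 in
theorem generalized_mixed_hybrid_wellposed
    {H HU VA VAs : Type*}
    [NormedAddCommGroup H] [InnerProductSpace ℝ H] [CompleteSpace H]
    [NormedAddCommGroup HU] [InnerProductSpace ℝ HU] [CompleteSpace HU]
    [NormedAddCommGroup VA] [InnerProductSpace ℝ VA] [CompleteSpace VA]
    [NormedAddCommGroup VAs] [InnerProductSpace ℝ VAs] [CompleteSpace VAs]
    (iA : VA →L[ℝ] H) (AT : VA →L[ℝ] HU)
    (iAs : VAs →L[ℝ] HU) (AsT : VAs →L[ℝ] H)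
    (normVA : ∀ v : VA, ‖v‖ ^ 2 = ‖iA v‖ ^ 2 + ‖AT v‖ ^ 2)
    (normVAs : ∀ w : VAs, ‖w‖ ^ 2 = ‖iAs w‖ ^ 2 + ‖AsT w‖ ^ 2)
    (HA : Submodule ℝ VA) (hHAcl : IsClosed (HA : Set VA))
    (HAs : Submodule ℝ VAs) (hHAscl : IsClosed (HAs : Set VAs))
    (HtAs : Submodule ℝ VAs) (hHtAscl : IsClosed (HtAs : Set VAs))
    (hsubs : HAs ≤ HtAs)
    -- 𝒞 and 𝒞⁻¹: symmetric, uniformly positive definite, mutually inverse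
    (C𝒞 Ci : HU →L[ℝ] HU)
    (hCsym : ∀ x y : HU, ⟪C𝒞 x, y⟫ = ⟪x, C𝒞 y⟫)
    (hCisym : ∀ x y : HU, ⟪Ci x, y⟫ = ⟪x, Ci y⟫)
    (hinv : ∀ x : HU, C𝒞 (Ci x) = x) (hinv' : ∀ x : HU, Ci (C𝒞 x) = x)
    (ci : ℝ) (hci : 0 < ci) (hCicoer : ∀ x : HU, ci * ‖x‖ ^ 2 ≤ ⟪Ci x, x⟫)
    -- (i) Poincaré–Friedrichs inequality on H₀(A)  (2.4a)
    (CPF : ℝ) (hCPF : 0 < CPF)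
    (hPF : ∀ v : VA, v ∈ HA → (∀ w ∈ HAs, eS iA AT iAs AsT v w = 0) →
      ‖iA v‖ ≤ CPF * ‖AT v‖)
    -- (ii) inf-sup condition for A* on H(A*)  (2.4b)
    (c_is : ℝ) (hcis : 0 < c_is)
    (hinfsup : ∀ g : H,
      c_is * ‖g‖ ≤ sSup {r : ℝ | ∃ w ∈ HAs, ‖w‖ = 1 ∧ r = ⟪AsT w, g⟫})
    -- distributional characterization of H₀(A) (A closed, boundary trace via H(A*))
    (hmaxA : ∀ (z : H) (g : HU),
      (∀ w ∈ HAs, ⟪z, AsT w⟫ = ⟪g, iAs w⟫) →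
      ∃ v : VA, v ∈ HA ∧ (∀ w ∈ HAs, eS iA AT iAs AsT v w = 0) ∧ iA v = z ∧ AT v = g)
    -- distributional characterization of H(A*) within H̃(A*,𝒯) (Lemma 4.2)
    (hmaxAs : ∀ w ∈ HtAs,
      (∀ v : VA, v ∈ HA → (∀ w' ∈ HAs, eS iA AT iAs AsT v w' = 0) →
        eS iA AT iAs AsT v w = 0) → w ∈ HAs) :
    ∃ C > 0, ∀ f : H,
      ∃ (W : VAs) (u : H) (u0 : VA),
        W ∈ HtAs ∧ u0 ∈ HA ∧ (∀ w ∈ HAs, eS iA AT iAs AsT u0 w = 0) ∧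
        -- (2.12a): (𝒞⁻¹w, δw) − (u, A*δw)_𝒯 − ⟨φ, δw⟩_𝒮 = 0 for δw ∈ H̃(A*,𝒯)
        (∀ δw ∈ HtAs,
          ⟪Ci (iAs W), iAs δw⟫ - ⟪u, AsT δw⟫ + eS iA AT iAs AsT u0 δw = 0) ∧
        -- (2.12b): −(A*w, δu)_𝒯 − ⟨δφ, w⟩_𝒮 = −(f, δu) for δu ∈ L²(Ω), δφ ∈ H₀(A,𝒮)
        (∀ (δu : H) (v0 : VA), v0 ∈ HA → (∀ w ∈ HAs, eS iA AT iAs AsT v0 w = 0) →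
          -⟪AsT W, δu⟫ + eS iA AT iAs AsT v0 W = -⟪f, δu⟫) ∧
        -- uniqueness of the solution (w, u, φ)
        (∀ (W' : VAs) (u' : H) (u0' : VA),
          W' ∈ HtAs → u0' ∈ HA → (∀ w ∈ HAs, eS iA AT iAs AsT u0' w = 0) →
          (∀ δw ∈ HtAs,
            ⟪Ci (iAs W'), iAs δw⟫ - ⟪u', AsT δw⟫ + eS iA AT iAs AsT u0' δw = 0) →
          (∀ (δu : H) (v0 : VA), v0 ∈ HA → (∀ w ∈ HAs, eS iA AT iAs AsT v0 w = 0) →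
            -⟪AsT W', δu⟫ + eS iA AT iAs AsT v0 W' = -⟪f, δu⟫) →
          W' = W ∧ u' = u ∧
            ∀ w ∈ HtAs, eS iA AT iAs AsT u0' w = eS iA AT iAs AsT u0 w) ∧
        -- a priori bound:  ‖w‖_{A*,𝒯} + ‖u‖ + ‖φ‖_{A,𝒮} ≤ C ‖f‖
        ‖W‖ + ‖u‖ + sInf {r : ℝ | ∃ v ∈ HA,
            (∀ w ∈ HtAs, eS iA AT iAs AsT v w = eS iA AT iAs AsT u0 w) ∧ r = ‖v‖}
          ≤ C * ‖f‖ ∧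
        -- regularity: u ∈ H₀(A), w = 𝒞Au ∈ H(A*), φ = tr^A_𝒮(u), A*w = f
        (∃ us : VA, us ∈ HA ∧ (∀ w ∈ HAs, eS iA AT iAs AsT us w = 0) ∧
          iA us = u ∧ iAs W = C𝒞 (AT us) ∧ W ∈ HAs ∧ AsT W = f ∧
          ∀ w ∈ HtAs, eS iA AT iAs AsT us w = eS iA AT iAs AsT u0 w) := by
  classical
  -- the space H₀(A) as a closed submodule of VA
  let V0 : Submodule ℝ VA :=
    { carrier := {v | v ∈ HA ∧ ∀ w ∈ HAs, eS iA AT iAs AsT v w = 0}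
      add_mem' := by
        rintro a b ⟨haA, haS⟩ ⟨hbA, hbS⟩
        refine ⟨HA.add_mem haA hbA, fun w hw => ?_⟩
        rw [eS_add_left, haS w hw, hbS w hw, add_zero]
      zero_mem' := ⟨HA.zero_mem, fun w _ => eS_zero_left iA AT iAs AsT w⟩
      smul_mem' := by
        rintro c a ⟨haA, haS⟩
        refine ⟨HA.smul_mem c haA, fun w hw => ?_⟩
        rw [eS_smul_left, haS w hw, mul_zero] }
  have memV0 : ∀ v : VA, v ∈ V0 ↔ (v ∈ HA ∧ ∀ w ∈ HAs, eS iA AT iAs AsT v w = 0) :=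
    fun _ => Iff.rfl
  have hV0cl : IsClosed (V0 : Set VA) := by
    have hset : (V0 : Set VA)
        = (HA : Set VA) ∩ ⋂ w ∈ HAs, {v : VA | eS iA AT iAs AsT v w = 0} := by
      ext v
      simp only [SetLike.mem_coe, memV0, Set.mem_inter_iff, Set.mem_iInter, Set.mem_setOf_eq]
    rw [hset]
    exact hHAcl.inter (isClosed_biInter fun w _ =>
      isClosed_eq (eS_cont iA AT iAs AsT w) continuous_const)
  haveI : CompleteSpace V0 := hV0cl.completeSpace_coe
  -- the "stiffness" operator on H₀(A)
  let T : V0 →L[ℝ] HU := AT.comp V0.subtypeL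
  let S : V0 →L[ℝ] V0 := (ContinuousLinearMap.adjoint T).comp (C𝒞.comp T)
  have hS : ∀ u v : V0, ⟪S u, v⟫ = ⟪C𝒞 (AT (u : VA)), AT (v : VA)⟫ := by
    intro u v
    simp only [S, T, ContinuousLinearMap.comp_apply, ContinuousLinearMap.adjoint_inner_left]
    rfl
  -- coercivity of 𝒞
  set M : ℝ := max ‖Ci‖ 1 with hMdef
  have hM : 0 < M := lt_of_lt_of_le one_pos (le_max_right _ _)
  set cC : ℝ := ci / M ^ 2 with hcCdef
  have hcC : 0 < cC := div_pos hci (by positivity)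
  have hCcoer : ∀ x : HU, cC * ‖x‖ ^ 2 ≤ ⟪C𝒞 x, x⟫ := by
    intro x
    have h1 : ci * ‖C𝒞 x‖ ^ 2 ≤ ⟪Ci (C𝒞 x), C𝒞 x⟫ := hCicoer _
    have h2 : ⟪Ci (C𝒞 x), C𝒞 x⟫ = ⟪C𝒞 x, x⟫ := by
      rw [hinv' x, real_inner_comm]
    have h3 : ‖x‖ ≤ M * ‖C𝒞 x‖ := by
      have h4 := Ci.le_opNorm (C𝒞 x)
      rw [hinv' x] at h4
      exact h4.trans (mul_le_mul_of_nonneg_right (le_max_left _ _) (norm_nonneg _))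
    have h5 : ‖x‖ ^ 2 ≤ M ^ 2 * ‖C𝒞 x‖ ^ 2 := by nlinarith [norm_nonneg x]
    have h6 : cC * (M ^ 2 * ‖C𝒞 x‖ ^ 2) = ci * ‖C𝒞 x‖ ^ 2 := by
      rw [hcCdef]; field_simp
    nlinarith [mul_le_mul_of_nonneg_left h5 hcC.le]
  -- coercivity of S
  set c0 : ℝ := cC / (CPF ^ 2 + 1) with hc0def
  have hc0 : 0 < c0 := div_pos hcC (by positivity)
  have hScoer : ∀ u : V0, c0 * ‖u‖ ^ 2 ≤ ⟪S u, u⟫ := by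
    intro u
    have hpf : ‖iA (u : VA)‖ ≤ CPF * ‖AT (u : VA)‖ := hPF _ u.2.1 u.2.2
    have hn : ‖u‖ ^ 2 = ‖iA (u : VA)‖ ^ 2 + ‖AT (u : VA)‖ ^ 2 := normVA (u : VA)
    have hSu : ⟪S u, u⟫ = ⟪C𝒞 (AT (u : VA)), AT (u : VA)⟫ := hS u u
    have hc : cC * ‖AT (u : VA)‖ ^ 2 ≤ ⟪C𝒞 (AT (u : VA)), AT (u : VA)⟫ := hCcoer _
    have h7 : ‖u‖ ^ 2 ≤ (CPF ^ 2 + 1) * ‖AT (u : VA)‖ ^ 2 := by nlinarith [norm_nonneg (iA (u : VA)), norm_nonneg (AT (u : VA))]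
    have h8 : c0 * ((CPF ^ 2 + 1) * ‖AT (u : VA)‖ ^ 2) = cC * ‖AT (u : VA)‖ ^ 2 := by
      rw [hc0def]; field_simp
    nlinarith [mul_le_mul_of_nonneg_left h7 hc0.le]
  -- S is surjective
  have hSsurj : Function.Surjective S := by
    have hlow : ∀ u : V0, c0 * ‖u‖ ≤ ‖S u‖ := by
      intro u
      rcases eq_or_ne u 0 with rfl | hne
      · simp
      · have h := hScoer u
        have h2 : ⟪S u, u⟫ ≤ ‖S u‖ * ‖u‖ := real_inner_le_norm _ _
        have hnu : 0 < ‖u‖ := norm_pos_iff.mpr hne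
        nlinarith
    have hanti : AntilipschitzWith (Real.toNNReal c0⁻¹) S := by
      refine S.antilipschitz_of_bound fun x => ?_
      rw [Real.coe_toNNReal _ (by positivity)]
      calc ‖x‖ = c0⁻¹ * (c0 * ‖x‖) := by field_simp
        _ ≤ c0⁻¹ * ‖S x‖ := mul_le_mul_of_nonneg_left (hlow x) (by positivity)
    have hclr : IsClosed ((LinearMap.range (S : V0 →ₗ[ℝ] V0) : Submodule ℝ V0) : Set V0) := by
      rw [LinearMap.coe_range]
      exact hanti.isClosed_range S.uniformContinuous
    haveI : CompleteSpace (LinearMap.range (S : V0 →ₗ[ℝ] V0)) := hclr.completeSpace_coe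
    have hbot : (LinearMap.range (S : V0 →ₗ[ℝ] V0))ᗮ = ⊥ := by
      rw [Submodule.eq_bot_iff]
      intro x hx
      have h0 : ⟪S x, x⟫ = 0 :=
        (Submodule.mem_orthogonal _ _).mp hx (S x) (LinearMap.mem_range_self _ x)
      have h := hScoer x
      by_contra hne
      have hp : 0 < ‖x‖ := norm_pos_iff.mpr hne
      nlinarith [mul_pos hc0 (mul_pos hp hp)]
    have htop : LinearMap.range (S : V0 →ₗ[ℝ] V0) = ⊤ := Submodule.orthogonal_eq_bot_iff.mp hbot
    exact LinearMap.range_eq_top.mp htop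
  -- the twisted graph of H(A*) inside the L² product space
  let Φl : VAs →ₗ[ℝ] WithLp 2 (H × HU) :=
    ((WithLp.linearEquiv 2 ℝ (H × HU)).symm.toLinearMap).comp
      ((AsT.prod (-iAs)).toLinearMap)
  have hΦfst : ∀ w : VAs, (Φl w).fst = AsT w := fun w => rfl
  have hΦsnd : ∀ w : VAs, (Φl w).snd = -(iAs w) := fun w => rfl
  have hΦnorm : ∀ w : VAs, ‖Φl w‖ = ‖w‖ := by
    intro w
    have h1 : ‖Φl w‖ ^ 2 = ‖AsT w‖ ^ 2 + ‖iAs w‖ ^ 2 := by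
      rw [WithLp.prod_norm_sq_eq_of_L2, hΦfst, hΦsnd, norm_neg, add_comm]
    have h2 := normVAs w
    rw [← Real.sqrt_sq (norm_nonneg (Φl w)), ← Real.sqrt_sq (norm_nonneg w), h1, h2, add_comm]
  let Φ : VAs →ₗᵢ[ℝ] WithLp 2 (H × HU) := ⟨Φl, hΦnorm⟩
  let G : Submodule ℝ (WithLp 2 (H × HU)) := Submodule.map Φl HAs
  have hGcl : IsClosed (G : Set (WithLp 2 (H × HU))) := by
    have hset : (G : Set (WithLp 2 (H × HU))) = Φ '' (HAs : Set VAs) := rfl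
    rw [hset]
    exact ((LinearIsometry.isComplete_image_iff Φ).mpr (hHAscl.isComplete)).isClosed
  haveI : CompleteSpace G := hGcl.completeSpace_coe
  -- the constant
  refine ⟨(‖C𝒞‖ + 2 * CPF + 1) * (CPF / cC) + 1, ?_, ?_⟩
  · have h1 : 0 ≤ (‖C𝒞‖ + 2 * CPF + 1) * (CPF / cC) :=
      mul_nonneg (by linarith [norm_nonneg C𝒞]) (div_nonneg hCPF.le hcC.le)
    linarith
  intro f
  -- solve the primal problem for us
  let j : V0 →L[ℝ] H := iA.comp V0.subtypeL
  obtain ⟨us0, hus0⟩ := hSsurj ((ContinuousLinearMap.adjoint j) f)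
  set us : VA := (us0 : VA) with husdef
  have husA : us ∈ HA := us0.2.1
  have husS : ∀ w ∈ HAs, eS iA AT iAs AsT us w = 0 := us0.2.2
  have heq : ∀ v : VA, v ∈ HA → (∀ w ∈ HAs, eS iA AT iAs AsT v w = 0) →
      ⟪C𝒞 (AT us), AT v⟫ = ⟪f, iA v⟫ := by
    intro v hvA hvS
    have h1 : ⟪S us0, (⟨v, hvA, hvS⟩ : V0)⟫ = ⟪C𝒞 (AT us), AT v⟫ := hS us0 _
    rw [hus0] at h1
    rw [← h1, ContinuousLinearMap.adjoint_inner_left]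
    rfl
  -- recover W from the closed-graph argument
  have hp0 : (WithLp.equiv 2 (H × HU)).symm (f, -(C𝒞 (AT us))) ∈ G := by
    have hGG : Gᗮᗮ = G := Submodule.orthogonal_orthogonal G
    rw [← hGG, Submodule.mem_orthogonal]
    intro q hq
    have hqw : ∀ w ∈ HAs, ⟪q.fst, AsT w⟫ = ⟪q.snd, iAs w⟫ := by
      intro w hw
      have hm : Φl w ∈ G := Submodule.mem_map_of_mem hw
      have h0 := (Submodule.mem_orthogonal _ _).mp hq (Φl w) hm
      rw [WithLp.prod_inner_apply] at h0
      change ⟪AsT w, q.fst⟫ + ⟪-(iAs w), q.snd⟫ = 0 at h0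
      rw [inner_neg_left] at h0
      have c1 : ⟪q.fst, AsT w⟫ = ⟪AsT w, q.fst⟫ := real_inner_comm _ _
      have c2 : ⟪q.snd, iAs w⟫ = ⟪iAs w, q.snd⟫ := real_inner_comm _ _
      linarith
    obtain ⟨v, hvA, hvS, hv1, hv2⟩ := hmaxA q.fst q.snd hqw
    rw [WithLp.prod_inner_apply]
    change ⟪q.fst, f⟫ + ⟪q.snd, -(C𝒞 (AT us))⟫ = 0
    rw [inner_neg_right]
    rw [← hv1, ← hv2]
    have hv := heq v hvA hvS
    have c1 : ⟪iA v, f⟫ = ⟪f, iA v⟫ := real_inner_comm _ _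
    have c2 : ⟪AT v, C𝒞 (AT us)⟫ = ⟪C𝒞 (AT us), AT v⟫ := real_inner_comm _ _
    linarith
  obtain ⟨Wm, hWmem, hΦW⟩ := Submodule.mem_map.mp hp0
  have hpair : (AsT Wm, -(iAs Wm)) = (f, -(C𝒞 (AT us))) := by
    have h := congrArg (WithLp.equiv 2 (H × HU)) hΦW
    rw [Equiv.apply_symm_apply] at h
    exact h
  have hWf : AsT Wm = f := congrArg Prod.fst hpair
  have hWi : iAs Wm = C𝒞 (AT us) := by
    have h := congrArg Prod.snd hpair
    simpa using h
  -- equation (2.12a) for the constructed solution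
  have h2a : ∀ δw ∈ HtAs,
      ⟪Ci (iAs Wm), iAs δw⟫ - ⟪iA us, AsT δw⟫ + eS iA AT iAs AsT us δw = 0 := by
    intro δw _
    rw [hWi, hinv']
    simp only [eS]
    rw [real_inner_comm (AsT δw) (iA us), real_inner_comm (iAs δw) (AT us)]
    ring
  -- energy estimate
  have hE : ⟪C𝒞 (AT us), AT us⟫ = ⟪f, iA us⟫ := heq us husA husS
  have hpf : ‖iA us‖ ≤ CPF * ‖AT us‖ := hPF us husA husS
  have hcen : cC * ‖AT us‖ ^ 2 ≤ ⟪C𝒞 (AT us), AT us⟫ := hCcoer _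
  have ha : ‖AT us‖ ≤ CPF / cC * ‖f‖ := by
    by_cases hz : ‖AT us‖ = 0
    · rw [hz]
      exact mul_nonneg (div_nonneg hCPF.le hcC.le) (norm_nonneg f)
    · have hz' : 0 < ‖AT us‖ := (norm_nonneg _).lt_of_ne (Ne.symm hz)
      have h2 : ⟪f, iA us⟫ ≤ ‖f‖ * ‖iA us‖ := real_inner_le_norm _ _
      have key : cC * ‖AT us‖ ≤ CPF * ‖f‖ := by
        have hmul : (cC * ‖AT us‖) * ‖AT us‖ ≤ (CPF * ‖f‖) * ‖AT us‖ := by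
          nlinarith [norm_nonneg f]
        exact le_of_mul_le_mul_right hmul hz'
      rw [div_mul_eq_mul_div, le_div_iff₀ hcC]
      linarith [mul_comm cC ‖AT us‖]
  have husb : ‖us‖ ≤ ‖iA us‖ + ‖AT us‖ := by
    nlinarith [normVA us, norm_nonneg us, norm_nonneg (iA us), norm_nonneg (AT us),
      mul_nonneg (norm_nonneg (iA us)) (norm_nonneg (AT us))]
  have hWb : ‖Wm‖ ≤ ‖C𝒞‖ * ‖AT us‖ + ‖f‖ := by
    have h1 : ‖Wm‖ ≤ ‖iAs Wm‖ + ‖AsT Wm‖ := by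
      nlinarith [normVAs Wm, norm_nonneg Wm, norm_nonneg (iAs Wm), norm_nonneg (AsT Wm),
        mul_nonneg (norm_nonneg (iAs Wm)) (norm_nonneg (AsT Wm))]
    rw [hWi, hWf] at h1
    exact h1.trans (by linarith [C𝒞.le_opNorm (AT us)])
  refine ⟨Wm, iA us, us, hsubs hWmem, husA, husS, h2a, ?_, ?_, ?_, ?_⟩
  · intro δu v0 hv0A hv0S
    rw [hWf, hv0S Wm hWmem, add_zero]
  · intro W' u' u0' hW't hu0'A hu0'S h1' h2'
    have hW'f : AsT W' = f := by
      have h0 : ∀ δu : H, ⟪AsT W' - f, δu⟫ = 0 := by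
        intro δu
        have h := h2' δu 0 HA.zero_mem (fun w _ => eS_zero_left iA AT iAs AsT w)
        rw [eS_zero_left] at h
        rw [inner_sub_left]
        linarith
      have h := h0 (AsT W' - f)
      rwa [inner_self_eq_zero, sub_eq_zero] at h
    have hDt : W' - Wm ∈ HtAs := HtAs.sub_mem hW't (hsubs hWmem)
    have hDAsT : AsT (W' - Wm) = 0 := by rw [map_sub, hW'f, hWf, sub_self]
    have hDHAs : W' - Wm ∈ HAs := by
      refine hmaxAs _ hDt fun v hv hvS => ?_
      have h1 := h2' 0 v hv hvS
      simp only [inner_zero_right, neg_zero] at h1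
      rw [eS_sub_right, hvS Wm hWmem]
      linarith
    have hsubeq : ∀ δw ∈ HtAs,
        ⟪Ci (iAs (W' - Wm)), iAs δw⟫ - ⟪u' - iA us, AsT δw⟫
          + (eS iA AT iAs AsT u0' δw - eS iA AT iAs AsT us δw) = 0 := by
      intro δw hδw
      have hx := h1' δw hδw
      have hy := h2a δw hδw
      rw [map_sub, map_sub, inner_sub_left, inner_sub_left]
      linarith
    have hDi : iAs (W' - Wm) = 0 := by
      have h := hsubeq (W' - Wm) hDt
      rw [hDAsT, inner_zero_right, hu0'S _ hDHAs, husS _ hDHAs] at h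
      have hc := hCicoer (iAs (W' - Wm))
      by_contra hne
      have hp : 0 < ‖iAs (W' - Wm)‖ := norm_pos_iff.mpr hne
      nlinarith [mul_pos hci (mul_pos hp hp)]
    have hq : ∀ w ∈ HAs, ⟪u' - iA us, AsT w⟫ = ⟪(0 : HU), iAs w⟫ := by
      intro w hw
      have h := hsubeq w (hsubs hw)
      rw [hDi] at h
      simp only [map_zero, inner_zero_left] at h
      rw [hu0'S w hw, husS w hw] at h
      rw [inner_zero_left]
      linarith
    obtain ⟨v, hvA, hvS, hv1, hv2⟩ := hmaxA (u' - iA us) 0 hq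
    have hu'u : u' = iA us := by
      have hp := hPF v hvA hvS
      rw [hv2, norm_zero, mul_zero] at hp
      have hv0 : iA v = 0 := norm_le_zero_iff.mp hp
      rw [hv0] at hv1
      exact sub_eq_zero.mp hv1.symm
    have hW'W : W' = Wm := by
      have h := normVAs (W' - Wm)
      rw [hDi, hDAsT] at h
      simp only [norm_zero] at h
      have h0 : ‖W' - Wm‖ = 0 := by nlinarith [norm_nonneg (W' - Wm)]
      exact sub_eq_zero.mp (norm_eq_zero.mp h0)
    refine ⟨hW'W, hu'u, fun w hw => ?_⟩
    have hx := h1' w hw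
    have hy := h2a w hw
    rw [hW'W, hu'u] at hx
    linarith
  · have hsinf : sInf {r : ℝ | ∃ v ∈ HA,
        (∀ w ∈ HtAs, eS iA AT iAs AsT v w = eS iA AT iAs AsT us w) ∧ r = ‖v‖} ≤ ‖us‖ := by
      apply csInf_le
      · refine ⟨0, ?_⟩
        rintro r ⟨v, _, _, rfl⟩
        exact norm_nonneg v
      · exact ⟨us, husA, fun w _ => rfl, rfl⟩
    have hcoef : (0 : ℝ) ≤ ‖C𝒞‖ + 2 * CPF + 1 := by linarith [norm_nonneg C𝒞]
    have hmul : (‖C𝒞‖ + 2 * CPF + 1) * ‖AT us‖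
        ≤ (‖C𝒞‖ + 2 * CPF + 1) * (CPF / cC * ‖f‖) := mul_le_mul_of_nonneg_left ha hcoef
    nlinarith [hWb, hpf, husb, hsinf, norm_nonneg f]
  · exact ⟨us, husA, husS, rfl, hWi, hWmem, hWf, fun w _ => rfl⟩

end
end

section
/- Under the assumptions of the ultraweak well-posedness theorem, and assuming existence of a Fortin operator F : 𝒱(𝒯) → 𝒱_h(𝒯) with b(δu, v − Fv) = 0 for all δu ∈ 𝒰_h(𝒯), v ∈ 𝒱(𝒯), and ‖Fv‖_𝒱 ≤ C_F‖v‖_𝒱, the mixed DPG scheme — find v_h ∈ 𝒱_h(𝒯), u_h ∈ 𝒰_h(𝒯) with (v_h, δv)_𝒱 + b(u_h, δv) = L(δv) for all δv ∈ 𝒱_h(𝒯) and b(δu, v_h) = 0 for all δu ∈ 𝒰_h(𝒯) — has a unique solution, and u_h is the minimizer over 𝒰_h(𝒯) of the discrete residual ‖b(w,·) − L‖_{𝒱_h(𝒯)*}; consequently ‖u − u_h‖²_𝒰 ≤ C‖u − w‖²_𝒰 for all w ∈ 𝒰_h(𝒯) with C independent of f, 𝒯, and the discrete subspaces. -/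
open scoped RealInnerProductSpace

set_option maxHeartbeats 1000000 in
theorem mixed_ultraweak_dpg_method
    {U V : Type*}
    [NormedAddCommGroup U] [InnerProductSpace ℝ U] [CompleteSpace U]
    [NormedAddCommGroup V] [InnerProductSpace ℝ V] [CompleteSpace V]
    (b : U →L[ℝ] V →L[ℝ] ℝ) (L : V →L[ℝ] ℝ)
    -- continuous well-posedness (Theorem 2.7): exact solution and inf-sup
    (ustar : U) (hustar : ∀ v : V, b ustar v = L v)
    (β : ℝ) (hβ : 0 < β) (hstab : ∀ u : U, β * ‖u‖ ≤ ‖b u‖)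
    (Uh : Submodule ℝ U) (hUh : FiniteDimensional ℝ Uh)
    (Vh : Submodule ℝ V) (hVh : FiniteDimensional ℝ Vh)
    -- Fortin operator (2.18)
    (F : V →ₗ[ℝ] V) (hFrange : ∀ v : V, F v ∈ Vh)
    (hFortin : ∀ u ∈ Uh, ∀ v : V, b u (v - F v) = 0)
    (CF : ℝ) (hCF : 0 < CF) (hFb : ∀ v : V, ‖F v‖ ≤ CF * ‖v‖) :
    ∃ C > 0,
      ∃ (vh : V) (uh : U), vh ∈ Vh ∧ uh ∈ Uh ∧
        -- (2.17a): (v_h, δv)_𝒱 + b(u_h, δv) = L(δv) for all δv ∈ 𝒱_h(𝒯)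
        (∀ δv ∈ Vh, ⟪vh, δv⟫ + b uh δv = L δv) ∧
        -- (2.17b): b(δu, v_h) = 0 for all δu ∈ 𝒰_h(𝒯)
        (∀ δu ∈ Uh, b δu vh = 0) ∧
        -- uniqueness of the discrete solution
        (∀ (vh' : V) (uh' : U), vh' ∈ Vh → uh' ∈ Uh →
          (∀ δv ∈ Vh, ⟪vh', δv⟫ + b uh' δv = L δv) →
          (∀ δu ∈ Uh, b δu vh' = 0) → vh' = vh ∧ uh' = uh) ∧
        -- u_h minimizes the discrete residual ‖b(w,·) − L‖_{𝒱_h(𝒯)*} over 𝒰_h(𝒯)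
        (∀ w ∈ Uh,
          sSup {r : ℝ | ∃ v ∈ Vh, ‖v‖ ≤ 1 ∧ r = |b uh v - L v|}
            ≤ sSup {r : ℝ | ∃ v ∈ Vh, ‖v‖ ≤ 1 ∧ r = |b w v - L v|}) ∧
        -- quasi-optimal error estimate
        (∀ w ∈ Uh, ‖ustar - uh‖ ^ 2 ≤ C * ‖ustar - w‖ ^ 2) := by
  haveI : FiniteDimensional ℝ Vh := hVh
  haveI : FiniteDimensional ℝ Uh := hUh
  -- Riesz representation on the finite-dimensional Hilbert space Vh
  set riesz : (↥Vh →L[ℝ] ℝ) → ↥Vh := fun g => (InnerProductSpace.toDual ℝ ↥Vh).symm g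
    with hriesz_def
  have hr : ∀ (g : ↥Vh →L[ℝ] ℝ) (x : ↥Vh), ⟪riesz g, x⟫ = g x := by
    intro g x; exact InnerProductSpace.toDual_symm_apply
  -- The "trial-to-test" operator Tl : U → Vh,  ⟪Tl w, x⟫ = b w x
  let Tl : U →ₗ[ℝ] ↥Vh :=
  { toFun := fun w => riesz ((b w).comp Vh.subtypeL)
    map_add' := by
      intro w w'
      apply ext_inner_right ℝ
      intro x
      rw [inner_add_left, hr, hr, hr]
      simp [map_add]
    map_smul' := by
      intro c w
      apply ext_inner_right ℝ
      intro x
      rw [real_inner_smul_left, hr, hr]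
      simp [map_smul] }
  have keyT : ∀ (w : U) (x : ↥Vh), ⟪Tl w, x⟫ = b w (x : V) := by
    intro w x; exact hr _ x
  set R0 : ↥Vh := riesz (L.comp Vh.subtypeL) with hR0_def
  have keyL : ∀ x : ↥Vh, ⟪R0, x⟫ = L (x : V) := fun x => hr _ x
  -- the discrete optimal test space K = Tl(Uh)
  let S : ↥Uh →ₗ[ℝ] ↥Vh := Tl.comp Uh.subtype
  let K : Submodule ℝ ↥Vh := LinearMap.range S
  haveI : FiniteDimensional ℝ ↥K := inferInstance
  haveI : CompleteSpace ↥K := FiniteDimensional.complete ℝ ↥K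
  set P : ↥Vh := (K.orthogonalProjectionOnto R0 : ↥Vh) with hP_def
  have hPK : P ∈ K := SetLike.coe_mem _
  obtain ⟨uh0, huh0⟩ : ∃ uh0 : ↥Uh, S uh0 = P := LinearMap.mem_range.mp hPK
  set vc : ↥Vh := R0 - P with hvc_def
  have hSuh0 : Tl ((uh0 : U)) = P := huh0
  have hvc_eq : vc = R0 - Tl ((uh0 : U)) := by rw [hvc_def, hSuh0]
  have hvc_inner : ∀ x : ↥Vh, ⟪vc, x⟫ = L (x : V) - b ((uh0 : U)) (x : V) := by
    intro x
    rw [hvc_def, inner_sub_left, keyL, ← hSuh0, keyT]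
  have hvc_orth : ∀ y ∈ K, ⟪y, vc⟫ = 0 := by
    have hmem : vc ∈ Kᗮ := Submodule.sub_starProjection_mem_orthogonal (K := K) R0
    intro y hy
    exact hmem y hy
  -- injectivity bound on Uh: β‖u‖ ≤ CF‖Tl u‖
  have hinj : ∀ u ∈ Uh, β * ‖u‖ ≤ CF * ‖Tl u‖ := by
    intro u hu
    refine (hstab u).trans ?_
    refine ContinuousLinearMap.opNorm_le_bound _ (by positivity) ?_
    intro v
    have h1 : b u v = b u (F v) := by
      have h := hFortin u hu v
      rw [map_sub] at h
      linarith
    have h2 : ‖b u (F v)‖ = |⟪Tl u, (⟨F v, hFrange v⟩ : ↥Vh)⟫| := by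
      rw [keyT, Real.norm_eq_abs]
    calc ‖b u v‖ = |⟪Tl u, (⟨F v, hFrange v⟩ : ↥Vh)⟫| := by rw [h1, h2]
      _ ≤ ‖Tl u‖ * ‖(⟨F v, hFrange v⟩ : ↥Vh)‖ := abs_real_inner_le_norm _ _
      _ = ‖Tl u‖ * ‖F v‖ := rfl
      _ ≤ ‖Tl u‖ * (CF * ‖v‖) := by
          exact mul_le_mul_of_nonneg_left (hFb v) (norm_nonneg _)
      _ = CF * ‖Tl u‖ * ‖v‖ := by ring
  have hTinj : ∀ u ∈ Uh, Tl u = 0 → u = 0 := by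
    intro u hu h0
    have h := hinj u hu
    rw [h0, norm_zero, mul_zero] at h
    have : ‖u‖ ≤ 0 := by nlinarith [norm_nonneg u]
    have : ‖u‖ = 0 := le_antisymm this (norm_nonneg u)
    exact norm_eq_zero.mp this
  -- residual representation : for w, R0 - Tl w represents  L - b w  on Vh
  have hRw_inner : ∀ (w : U) (x : ↥Vh), ⟪R0 - Tl w, x⟫ = L (x : V) - b w (x : V) := by
    intro w x
    rw [inner_sub_left, keyL, keyT]
  -- minimality of ‖vc‖
  have hmin : ∀ w ∈ Uh, ‖vc‖ ≤ ‖R0 - Tl w‖ := by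
    intro w hw
    have hy : Tl w ∈ K := ⟨⟨w, hw⟩, rfl⟩
    have horth : ⟪vc, P - Tl w⟫ = 0 := by
      rw [real_inner_comm]
      exact hvc_orth _ (K.sub_mem hPK hy)
    have hsum : vc + (P - Tl w) = R0 - Tl w := by rw [hvc_def]; abel
    have hpyth := norm_add_sq_real vc (P - Tl w)
    rw [hsum, horth] at hpyth
    nlinarith [norm_nonneg vc, norm_nonneg (R0 - Tl w), sq_nonneg (‖P - Tl w‖)]
  -- residual norm bound : ‖R0 - Tl w‖ ≤ ‖b‖ ‖ustar - w‖
  have hres : ∀ w : U, ‖R0 - Tl w‖ ≤ ‖b‖ * ‖ustar - w‖ := by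
    intro w
    set Rw : ↥Vh := R0 - Tl w with hRw_def
    have h2 : ⟪Rw, Rw⟫ = b (ustar - w) ((Rw : V)) := by
      rw [hRw_inner w Rw, map_sub, ContinuousLinearMap.sub_apply, hustar]
    have h3 : ‖Rw‖ ^ 2 ≤ ‖b‖ * ‖ustar - w‖ * ‖Rw‖ := by
      rw [← real_inner_self_eq_norm_sq, h2]
      calc b (ustar - w) ((Rw : V)) ≤ ‖b (ustar - w) ((Rw : V))‖ := by
            rw [Real.norm_eq_abs]; exact le_abs_self _
        _ ≤ ‖b‖ * ‖ustar - w‖ * ‖(Rw : V)‖ := ContinuousLinearMap.le_opNorm₂ b _ _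
        _ = ‖b‖ * ‖ustar - w‖ * ‖Rw‖ := rfl
    rcases eq_or_lt_of_le (norm_nonneg Rw) with h0 | h0
    · rw [← h0]
      positivity
    · have := h3
      rw [pow_two] at this
      exact le_of_mul_le_mul_right this h0
  -- the discrete solution
  refine ⟨(‖b‖ * (1 + 2 * CF) / β) ^ 2 + 1, by positivity, (vc : V), (uh0 : U),
    vc.2, uh0.2, ?_, ?_, ?_, ?_, ?_⟩
  · -- (2.17a)
    intro δv hδv
    have h := hvc_inner ⟨δv, hδv⟩
    have hco : ⟪(vc : V), δv⟫ = ⟪vc, (⟨δv, hδv⟩ : ↥Vh)⟫ := rfl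
    rw [hco, h]
    ring
  · -- (2.17b)
    intro δu hδu
    have h : b δu ((vc : V)) = ⟪Tl δu, vc⟫ := (keyT δu vc).symm
    rw [h]
    exact hvc_orth _ ⟨⟨δu, hδu⟩, rfl⟩
  · -- uniqueness
    intro vh' uh' hv' hu' ha' hb'
    set x' : ↥Vh := ⟨vh', hv'⟩ with hx'_def
    have e1 : ∀ x : ↥Vh, ⟪x' - vc + Tl (uh' - (uh0 : U)), x⟫ = 0 := by
      intro x
      have h1 := ha' (x : V) x.2
      have h2 := hvc_inner x
      have h3 : ⟪vh', (x : V)⟫ = ⟪x', x⟫ := rfl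
      rw [h3] at h1
      rw [inner_add_left, inner_sub_left, keyT, map_sub, ContinuousLinearMap.sub_apply]
      linarith
    have e2 : x' - vc = - Tl (uh' - (uh0 : U)) := by
      have h := e1 (x' - vc + Tl (uh' - (uh0 : U)))
      have h0 : x' - vc + Tl (uh' - (uh0 : U)) = 0 := by
        exact inner_self_eq_zero.mp h
      linear_combination (norm := abel) h0
    have e3 : ⟪Tl (uh' - (uh0 : U)), x' - vc⟫ = 0 := by
      have hmemu : uh' - (uh0 : U) ∈ Uh := Uh.sub_mem hu' uh0.2
      have hb1 := hb' (uh' - (uh0 : U)) hmemu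
      have hb2 : b (uh' - (uh0 : U)) ((vc : V)) = 0 := by
        rw [← keyT]
        exact hvc_orth _ ⟨⟨uh' - (uh0 : U), hmemu⟩, rfl⟩
      rw [inner_sub_right, keyT, keyT]
      have hx'c : ((x' : V)) = vh' := rfl
      rw [hx'c, hb1, hb2]
      ring
    rw [e2, inner_neg_right, neg_eq_zero, inner_self_eq_zero] at e3
    have huu : uh' - (uh0 : U) = 0 :=
      hTinj _ (Uh.sub_mem hu' uh0.2) e3
    have huh' : uh' = (uh0 : U) := by rwa [sub_eq_zero] at huu
    constructor
    · have : x' - vc = 0 := by rw [e2, huu, map_zero, neg_zero]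
      have : x' = vc := by rwa [sub_eq_zero] at this
      exact congrArg Subtype.val this
    · exact huh'
  · -- minimization of the discrete residual
    intro w hw
    have habs : ∀ (u : U) (v : V) (hv : v ∈ Vh),
        |b u v - L v| = |⟪R0 - Tl u, (⟨v, hv⟩ : ↥Vh)⟫| := by
      intro u v hv
      rw [hRw_inner u ⟨v, hv⟩, abs_sub_comm]
    have hub : ∀ (u : U) (r : ℝ), r ∈ {r : ℝ | ∃ v ∈ Vh, ‖v‖ ≤ 1 ∧ r = |b u v - L v|} →
        r ≤ ‖R0 - Tl u‖ := by
      rintro u r ⟨v, hv, hv1, rfl⟩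
      rw [habs u v hv]
      calc |⟪R0 - Tl u, (⟨v, hv⟩ : ↥Vh)⟫| ≤ ‖R0 - Tl u‖ * ‖(⟨v, hv⟩ : ↥Vh)‖ :=
            abs_real_inner_le_norm _ _
        _ ≤ ‖R0 - Tl u‖ * 1 := by
            exact mul_le_mul_of_nonneg_left hv1 (norm_nonneg _)
        _ = ‖R0 - Tl u‖ := mul_one _
    have h0mem : ∀ u : U, (0 : ℝ) ∈ {r : ℝ | ∃ v ∈ Vh, ‖v‖ ≤ 1 ∧ r = |b u v - L v|} := by
      intro u
      exact ⟨0, Vh.zero_mem, by simp, by simp⟩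
    have hbddw : BddAbove {r : ℝ | ∃ v ∈ Vh, ‖v‖ ≤ 1 ∧ r = |b w v - L v|} :=
      ⟨‖R0 - Tl w‖, fun r hr => hub w r hr⟩
    have step1 : sSup {r : ℝ | ∃ v ∈ Vh, ‖v‖ ≤ 1 ∧ r = |b ((uh0 : U)) v - L v|} ≤ ‖vc‖ := by
      refine Real.sSup_le ?_ (norm_nonneg _)
      intro r hr
      have := hub ((uh0 : U)) r hr
      rwa [← hvc_eq] at this
    have step3 : ‖R0 - Tl w‖ ≤ sSup {r : ℝ | ∃ v ∈ Vh, ‖v‖ ≤ 1 ∧ r = |b w v - L v|} := by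
      by_cases h : R0 - Tl w = 0
      · rw [h, norm_zero]
        exact le_csSup hbddw (h0mem w)
      · set Rw : ↥Vh := R0 - Tl w with hRw_def
        have hRwpos : 0 < ‖Rw‖ := norm_pos_iff.mpr h
        set x : ↥Vh := (‖Rw‖⁻¹) • Rw with hx_def
        have hxnorm : ‖x‖ = 1 := by
          rw [hx_def, norm_smul, norm_inv, norm_norm, inv_mul_cancel₀ (ne_of_gt hRwpos)]
        have hxVnorm : ‖(x : V)‖ = 1 := hxnorm
        have hinner : ⟪Rw, x⟫ = ‖Rw‖ := by
          rw [hx_def, real_inner_smul_right, real_inner_self_eq_norm_sq, pow_two,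
            ← mul_assoc, inv_mul_cancel₀ (ne_of_gt hRwpos), one_mul]
        have hmem : ‖Rw‖ ∈ {r : ℝ | ∃ v ∈ Vh, ‖v‖ ≤ 1 ∧ r = |b w v - L v|} := by
          refine ⟨(x : V), x.2, le_of_eq hxVnorm, ?_⟩
          rw [habs w (x : V) x.2]
          have hxx : (⟨(x : V), x.2⟩ : ↥Vh) = x := rfl
          rw [hxx, ← hRw_def, hinner, abs_of_pos hRwpos]
        exact le_csSup hbddw hmem
    calc sSup {r : ℝ | ∃ v ∈ Vh, ‖v‖ ≤ 1 ∧ r = |b ((uh0 : U)) v - L v|}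
        ≤ ‖vc‖ := step1
      _ ≤ ‖R0 - Tl w‖ := hmin w hw
      _ ≤ sSup {r : ℝ | ∃ v ∈ Vh, ‖v‖ ≤ 1 ∧ r = |b w v - L v|} := step3
  · -- quasi-optimality
    intro w hw
    have hvcle : ‖vc‖ ≤ ‖b‖ * ‖ustar - w‖ := (hmin w hw).trans (hres w)
    have hbound : ∀ v : V,
        ‖b (ustar - (uh0 : U)) v‖ ≤ ‖b‖ * (1 + 2 * CF) * ‖ustar - w‖ * ‖v‖ := by
      intro v
      set Fx : ↥Vh := ⟨F v, hFrange v⟩ with hFx_def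
      have hF1 : b (w - (uh0 : U)) v = b (w - (uh0 : U)) (F v) := by
        have h := hFortin (w - (uh0 : U)) (Uh.sub_mem hw uh0.2) v
        rw [map_sub] at h
        linarith
      have h2 : ⟪vc, Fx⟫ = L (F v) - b ((uh0 : U)) (F v) := hvc_inner Fx
      have hdecomp : b (ustar - (uh0 : U)) v
          = b (ustar - w) v - b (ustar - w) (F v) + ⟪vc, Fx⟫ := by
        rw [h2]
        have hLF := hustar (F v)
        have hsub1 : b (ustar - (uh0 : U)) v = b ustar v - b ((uh0 : U)) v := by
          rw [map_sub, ContinuousLinearMap.sub_apply]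
        have hsub2 : b (ustar - w) v = b ustar v - b w v := by
          rw [map_sub, ContinuousLinearMap.sub_apply]
        have hsub3 : b (ustar - w) (F v) = b ustar (F v) - b w (F v) := by
          rw [map_sub, ContinuousLinearMap.sub_apply]
        have hsub4 : b (w - (uh0 : U)) v = b w v - b ((uh0 : U)) v := by
          rw [map_sub, ContinuousLinearMap.sub_apply]
        have hsub5 : b (w - (uh0 : U)) (F v) = b w (F v) - b ((uh0 : U)) (F v) := by
          rw [map_sub, ContinuousLinearMap.sub_apply]
        rw [hsub4, hsub5] at hF1
        linarith
      have hb1 : |b (ustar - w) v| ≤ ‖b‖ * ‖ustar - w‖ * ‖v‖ := by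
        rw [← Real.norm_eq_abs]
        exact ContinuousLinearMap.le_opNorm₂ b _ _
      have hb2 : |b (ustar - w) (F v)| ≤ ‖b‖ * ‖ustar - w‖ * (CF * ‖v‖) := by
        rw [← Real.norm_eq_abs]
        calc ‖b (ustar - w) (F v)‖ ≤ ‖b‖ * ‖ustar - w‖ * ‖F v‖ :=
              ContinuousLinearMap.le_opNorm₂ b _ _
          _ ≤ ‖b‖ * ‖ustar - w‖ * (CF * ‖v‖) := by
              exact mul_le_mul_of_nonneg_left (hFb v) (by positivity)
      have hb3 : |⟪vc, Fx⟫| ≤ (‖b‖ * ‖ustar - w‖) * (CF * ‖v‖) := by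
        calc |⟪vc, Fx⟫| ≤ ‖vc‖ * ‖Fx‖ := abs_real_inner_le_norm _ _
          _ = ‖vc‖ * ‖F v‖ := rfl
          _ ≤ (‖b‖ * ‖ustar - w‖) * (CF * ‖v‖) := by
              have h1 : ‖vc‖ * ‖F v‖ ≤ (‖b‖ * ‖ustar - w‖) * ‖F v‖ :=
                mul_le_mul_of_nonneg_right hvcle (norm_nonneg _)
              have h2 : (‖b‖ * ‖ustar - w‖) * ‖F v‖ ≤ (‖b‖ * ‖ustar - w‖) * (CF * ‖v‖) :=
                mul_le_mul_of_nonneg_left (hFb v) (by positivity)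
              linarith
      rw [Real.norm_eq_abs, hdecomp]
      calc |b (ustar - w) v - b (ustar - w) (F v) + ⟪vc, Fx⟫|
          ≤ |b (ustar - w) v| + |b (ustar - w) (F v)| + |⟪vc, Fx⟫| := by
            exact (abs_add_le _ _).trans (by gcongr; exact abs_sub _ _)
        _ ≤ ‖b‖ * ‖ustar - w‖ * ‖v‖ + ‖b‖ * ‖ustar - w‖ * (CF * ‖v‖)
              + (‖b‖ * ‖ustar - w‖) * (CF * ‖v‖) := by linarith
        _ = ‖b‖ * (1 + 2 * CF) * ‖ustar - w‖ * ‖v‖ := by ring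
    have hop : ‖b (ustar - (uh0 : U))‖ ≤ ‖b‖ * (1 + 2 * CF) * ‖ustar - w‖ :=
      ContinuousLinearMap.opNorm_le_bound _ (by positivity) hbound
    have hkey : β * ‖ustar - (uh0 : U)‖ ≤ ‖b‖ * (1 + 2 * CF) * ‖ustar - w‖ :=
      (hstab _).trans hop
    have ha : ‖ustar - (uh0 : U)‖ ≤ (‖b‖ * (1 + 2 * CF) / β) * ‖ustar - w‖ := by
      rw [div_mul_eq_mul_div, le_div_iff₀ hβ]
      linarith [hkey]
    have hsq : ‖ustar - (uh0 : U)‖ ^ 2 ≤ ((‖b‖ * (1 + 2 * CF) / β) * ‖ustar - w‖) ^ 2 := by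
      have h1 : 0 ≤ ‖ustar - (uh0 : U)‖ := norm_nonneg _
      nlinarith [ha]
    calc ‖ustar - (uh0 : U)‖ ^ 2
        ≤ ((‖b‖ * (1 + 2 * CF) / β) * ‖ustar - w‖) ^ 2 := hsq
      _ = (‖b‖ * (1 + 2 * CF) / β) ^ 2 * ‖ustar - w‖ ^ 2 := by ring
      _ ≤ ((‖b‖ * (1 + 2 * CF) / β) ^ 2 + 1) * ‖ustar - w‖ ^ 2 := by
          nlinarith [sq_nonneg (‖ustar - w‖)]
end

section
/- The operator div div : H(div div, Ω; 𝕊) → L²(Ω) is surjective on a bounded simply connected Lipschitz domain Ω ⊂ ℝ²; consequently there exists c_is > 0 with sup_{Q ∈ H(div div,Ω;𝕊), ‖Q‖_{divdiv}=1} (div div Q, v) ≥ c_is ‖v‖ for all v ∈ L²(Ω). Here H(div div, Ω; 𝕊) := {M ∈ L²(Ω;𝕊) : div div M ∈ L²(Ω)} with norm ‖M‖²_{divdiv} = ‖M‖² + ‖div div M‖². -/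
open MeasureTheory
open scoped RealInnerProductSpace

noncomputable section

/-- The Euclidean plane. -/
abbrev E2 := EuclideanSpace ℝ (Fin 2)

/-- Second partial derivative `∂_i ∂_j φ`. -/
def pd2 (φ : E2 → ℝ) (i j : Fin 2) (p : E2) : ℝ :=
  fderiv ℝ (fun q => fderiv ℝ φ q (EuclideanSpace.single i 1)) p
    (EuclideanSpace.single j 1)

/-- `g = div div M ∈ L²(Ω)` in the distributional sense:
`Σ_{ij} ∫_Ω M_{ij} ∂_i∂_j φ = ∫_Ω g φ` for all test functions
`φ ∈ C_c^∞(Ω)`. -/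
def weakDivDiv (Ω : Set E2) (M : Fin 2 → Fin 2 → E2 → ℝ) (g : E2 → ℝ) : Prop :=
  ∀ φ : E2 → ℝ, ContDiff ℝ (⊤ : ℕ∞) φ → HasCompactSupport φ → tsupport φ ⊆ Ω →
    (∑ i : Fin 2, ∑ j : Fin 2, ∫ p in Ω, M i j p * pd2 φ i j p)
      = ∫ p in Ω, g p * φ p

namespace DivDivAux

/-- canonical measurable equiv to the plane -/
def T2 : E2 ≃ᵐ ℝ × ℝ := (MeasurableEquiv.toLp 2 (Fin 2 → ℝ)).symm.trans (MeasurableEquiv.finTwoArrow)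

lemma T2mp : MeasurePreserving T2 volume volume :=
  (EuclideanSpace.volume_preserving_symm_measurableEquiv_toLp (Fin 2)).trans (volume_preserving_finTwoArrow ℝ)

lemma T2_apply (x : E2) : T2 x = (x 0, x 1) := rfl

lemma T2_symm_coord0 (z : ℝ × ℝ) : (T2.symm z) 0 = z.1 := rfl
lemma T2_symm_coord1 (z : ℝ × ℝ) : (T2.symm z) 1 = z.2 := rfl

lemma T2_symm_eq (z : ℝ × ℝ) :
    T2.symm z = z.1 • (EuclideanSpace.single (0 : Fin 2) (1:ℝ))
      + z.2 • (EuclideanSpace.single (1 : Fin 2) (1:ℝ)) := by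
  ext i; fin_cases i <;> simp [T2] <;> rfl

lemma T2mps : MeasurePreserving (T2.symm : ℝ × ℝ → E2) volume volume :=
  MeasurePreserving.symm T2 T2mp

lemma T2_symm_continuous : Continuous (fun z : ℝ × ℝ => T2.symm z) := by
  simp only [T2_symm_eq]; fun_prop

lemma abs_coord_le (x : E2) (i : Fin 2) : |x i| ≤ ‖x‖ := by
  rw [EuclideanSpace.norm_eq, ← Real.sqrt_sq_eq_abs]
  apply Real.sqrt_le_sqrt
  have := Finset.single_le_sum (f := fun j => ‖x j‖ ^ 2)
    (fun j _ => sq_nonneg _) (Finset.mem_univ i)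
  simpa [Real.norm_eq_abs, sq_abs] using this

lemma fderiv_zero_of_nmem {φ : E2 → ℝ} {x : E2} (hx : x ∉ tsupport φ) :
    fderiv ℝ φ x = 0 := by
  have h0 : φ =ᶠ[nhds x] (fun _ => (0:ℝ)) :=
    Filter.eventuallyEq_of_mem ((isClosed_tsupport φ).isOpen_compl.mem_nhds hx)
      (fun y hy => image_eq_zero_of_notMem_tsupport hy)
  rw [h0.fderiv_eq, fderiv_fun_const]; rfl

lemma dphi_support {φ : E2 → ℝ} {x : E2} (hx : x ∉ tsupport φ) (v : E2) :
    fderiv ℝ φ x v = 0 := by rw [fderiv_zero_of_nmem hx]; rfl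

lemma tsupport_dphi_subset (φ : E2 → ℝ) (v : E2) :
    tsupport (fun q => fderiv ℝ φ q v) ⊆ tsupport φ := by
  apply closure_minimal _ (isClosed_tsupport φ)
  intro q hq
  by_contra hns
  exact hq (dphi_support hns v)

lemma pd2_zero_of_nmem {φ : E2 → ℝ} {x : E2} (hx : x ∉ tsupport φ) (i j : Fin 2) :
    pd2 φ i j x = 0 := by
  have : x ∉ tsupport (fun q => fderiv ℝ φ q (EuclideanSpace.single i 1)) :=
    fun h => hx (tsupport_dphi_subset φ _ h)
  exact dphi_support this _

lemma dphi_smooth {φ : E2 → ℝ} (hφ : ContDiff ℝ (⊤ : ℕ∞) φ) (v : E2) :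
    ContDiff ℝ (⊤ : ℕ∞) (fun q => fderiv ℝ φ q v) :=
  (hφ.fderiv_right (by simp)).clm_apply contDiff_const

lemma pd2_continuous {φ : E2 → ℝ} (hφ : ContDiff ℝ (⊤ : ℕ∞) φ) (i j : Fin 2) :
    Continuous (pd2 φ i j) :=
  ((((dphi_smooth hφ _).fderiv_right (m := (⊤ : ℕ∞)) (by simp))).clm_apply contDiff_const).continuous

lemma hasDerivAt_slice {f : E2 → ℝ} (hf : ContDiff ℝ (⊤ : ℕ∞) f) (b a : ℝ) :
    HasDerivAt (fun a => f (T2.symm (a, b)))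
      (fderiv ℝ f (T2.symm (a, b)) (EuclideanSpace.single (0 : Fin 2) (1:ℝ))) a := by
  have hγ : HasDerivAt (fun a : ℝ => T2.symm (a, b))
      (EuclideanSpace.single (0 : Fin 2) (1:ℝ)) a := by
    simp only [T2_symm_eq]
    have h1 : HasDerivAt (fun a : ℝ => a • (EuclideanSpace.single (0 : Fin 2) (1:ℝ)))
        (EuclideanSpace.single (0 : Fin 2) (1:ℝ)) a := by
      simpa using (hasDerivAt_id a).smul_const (EuclideanSpace.single (0 : Fin 2) (1:ℝ))
    simpa using h1.add_const (b • EuclideanSpace.single (1 : Fin 2) (1:ℝ))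
  exact ((hf.differentiable (by simp) _).hasFDerivAt).comp_hasDerivAt a hγ

/-- a.e. lifting from the second factor to the product. -/
lemma ae_prod_of_ae_right {P : ℝ × ℝ → Prop}
    (h : ∀ᵐ b : ℝ, ∀ a : ℝ, P (a, b)) :
    ∀ᵐ z : ℝ × ℝ ∂((volume : Measure ℝ).prod volume), P z := by
  rw [ae_iff] at h ⊢
  have hsub : {z : ℝ × ℝ | ¬ P z} ⊆ Set.univ ×ˢ {b : ℝ | ¬ ∀ a : ℝ, P (a, b)} := by
    intro z hz
    exact ⟨trivial, fun hall => hz (by simpa using hall z.1)⟩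
  exact measure_mono_null hsub (by rw [Measure.prod_prod, h, mul_zero])

/-- Cauchy-Schwarz for integrals. -/
lemma cs {α : Type*} [MeasurableSpace α] (μ : Measure α) (f h : α → ℝ)
    (hf : MemLp f 2 μ) (hh : MemLp h 2 μ) :
    ∫ p, f p * h p ∂μ ≤ (∫ p, f p ^ 2 ∂μ) ^ (1/2:ℝ) * (∫ p, h p ^ 2 ∂μ) ^ (1/2:ℝ) := by
  have hof : ENNReal.ofReal (2:ℝ) = 2 := by norm_num [ENNReal.ofReal_ofNat]
  have hfa : MemLp (fun p => |f p|) (ENNReal.ofReal (2:ℝ)) μ := by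
    rw [hof]; simpa [Real.norm_eq_abs] using hf.norm
  have hha : MemLp (fun p => |h p|) (ENNReal.ofReal (2:ℝ)) μ := by
    rw [hof]; simpa [Real.norm_eq_abs] using hh.norm
  have h2 := integral_mul_le_Lp_mul_Lq_of_nonneg (μ := μ) (p := 2) (q := 2)
    ⟨by norm_num, by norm_num, by norm_num⟩ (Filter.Eventually.of_forall fun p => abs_nonneg _)
    (Filter.Eventually.of_forall fun p => abs_nonneg _) hfa hha
  have habs2 : ∀ (u : α → ℝ), (fun p => |u p| ^ (2:ℝ)) = fun p => u p ^ 2 := by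
    intro u; funext p
    rw [show ((2:ℝ)) = ((2:ℕ):ℝ) by norm_num, Real.rpow_natCast, sq_abs]
  rw [habs2 f, habs2 h] at h2
  have hint : Integrable (fun p => |f p| * |h p|) μ := by
    apply Integrable.mono' ((hf.integrable_sq.add hh.integrable_sq).const_mul (1/2))
    · exact (hf.1.norm.mul hh.1.norm).congr
        (Filter.Eventually.of_forall fun p => by simp [Real.norm_eq_abs])
    · apply Filter.Eventually.of_forall
      intro p
      have : |(|f p| * |h p|)| = |f p| * |h p| := abs_of_nonneg (by positivity)
      rw [Real.norm_eq_abs, this]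
      simp only [Pi.add_apply]
      nlinarith [sq_nonneg (|f p| - |h p|), sq_abs (f p), sq_abs (h p)]
  have hmul : Integrable (fun p => f p * h p) μ := by
    have hAE : AEStronglyMeasurable (fun p => f p * h p) μ := hf.1.mul hh.1
    apply hint.mono' hAE
    exact Filter.Eventually.of_forall fun p => by rw [Real.norm_eq_abs, abs_mul]
  calc ∫ p, f p * h p ∂μ ≤ ∫ p, |f p| * |h p| ∂μ := by
        apply integral_mono hmul hint
        intro p
        exact (le_abs_self _).trans (abs_mul (f p) (h p)).le
    _ ≤ _ := by simpa using h2


/-! ### The explicit double antiderivative construction -/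

def Gfun (g' : E2 → ℝ) : ℝ × ℝ → ℝ := fun z => g' (T2.symm z)

def kern (R a t : ℝ) : ℝ := if t ∈ Set.Ioo (-R) a then a - t else 0

def uP (R : ℝ) (g' : E2 → ℝ) : ℝ × ℝ → ℝ := fun z => ∫ t, kern R z.1 t * Gfun g' (t, z.2)

lemma kern_meas (R : ℝ) : Measurable fun z : ℝ × ℝ => kern R z.1 z.2 := by
  unfold kern
  have hs : MeasurableSet {z : ℝ × ℝ | z.2 ∈ Set.Ioo (-R) z.1} := by
    have : {z : ℝ × ℝ | z.2 ∈ Set.Ioo (-R) z.1}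
        = {z : ℝ × ℝ | -R < z.2} ∩ {z : ℝ × ℝ | z.2 < z.1} := by
      ext z; simp [Set.mem_Ioo]
    rw [this]
    exact (measurableSet_lt measurable_const measurable_snd).inter
      (measurableSet_lt measurable_snd measurable_fst)
  exact Measurable.ite hs (measurable_fst.sub measurable_snd) measurable_const

lemma kern_abs_le {R a : ℝ} (t : ℝ) (ha : |a| ≤ R) : |kern R a t| ≤ 2 * R := by
  have haR := abs_le.1 ha
  unfold kern
  split_ifs with h
  · obtain ⟨h1, h2⟩ := h
    rw [abs_of_nonneg (by linarith)]
    linarith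
  · rw [abs_zero]
    linarith [abs_nonneg a]

lemma kern_zero_of_le {R a t : ℝ} (h : a ≤ t) : kern R a t = 0 := by
  unfold kern
  rw [if_neg]
  rintro ⟨h1, h2⟩
  linarith

lemma uP_sm (R : ℝ) {g' : E2 → ℝ} (hg'm : StronglyMeasurable g') :
    StronglyMeasurable (uP R g') := by
  have hm : Measurable (fun q : (ℝ × ℝ) × ℝ => kern R q.1.1 q.2 * Gfun g' (q.2, q.1.2)) := by
    apply Measurable.mul
    · exact (kern_meas R).comp (measurable_fst.fst.prodMk measurable_snd)
    · exact (hg'm.measurable.comp T2.symm.measurable).comp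
        (measurable_snd.prodMk measurable_fst.snd)
  exact hm.stronglyMeasurable.integral_prod_right'

lemma rep (R : ℝ) (hR : 0 < R) (g' : E2 → ℝ) (hg'm : StronglyMeasurable g')
    (hg'i : Integrable g' volume)
    (hg'supp : ∀ x : E2, g' x ≠ 0 → ∀ i : Fin 2, |x i| < R)
    (φ : E2 → ℝ) (hφ : ContDiff ℝ (⊤ : ℕ∞) φ) (hφc : HasCompactSupport φ)
    (hφsupp : ∀ x ∈ tsupport φ, ∀ i : Fin 2, |x i| < R) :
    ∫ z : ℝ × ℝ, uP R g' z * pd2 φ 0 0 (T2.symm z)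
      = ∫ z : ℝ × ℝ, Gfun g' z * φ (T2.symm z) := by
  set G := Gfun g' with hGdef
  set W : ℝ × ℝ → ℝ := fun z => pd2 φ 0 0 (T2.symm z) with hWdef
  set ψ : ℝ × ℝ → ℝ := fun z => φ (T2.symm z) with hψdef
  have hGm : Measurable G := hg'm.measurable.comp T2.symm.measurable
  have hGsm : StronglyMeasurable G := hGm.stronglyMeasurable
  have hWc : Continuous W := (pd2_continuous hφ 0 0).comp T2_symm_continuous
  have hψc : Continuous ψ := hφ.continuous.comp T2_symm_continuous
  have hWz : ∀ z : ℝ × ℝ, W z ≠ 0 → |z.1| < R ∧ |z.2| < R := by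
    intro z hz
    have hx : T2.symm z ∈ tsupport φ := by
      by_contra hx; exact hz (pd2_zero_of_nmem hx 0 0)
    exact ⟨by simpa [T2_symm_coord0] using hφsupp _ hx 0,
           by simpa [T2_symm_coord1] using hφsupp _ hx 1⟩
  have hGz : ∀ z : ℝ × ℝ, G z ≠ 0 → |z.1| < R ∧ |z.2| < R := by
    intro z hz
    exact ⟨by simpa [T2_symm_coord0] using hg'supp _ hz 0,
           by simpa [T2_symm_coord1] using hg'supp _ hz 1⟩
  have hpd2cs : HasCompactSupport (pd2 φ 0 0) := by
    apply IsCompact.of_isClosed_subset hφc (isClosed_tsupport _)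
    apply closure_minimal _ (isClosed_tsupport φ)
    intro q hq
    by_contra hns
    exact hq (pd2_zero_of_nmem hns 0 0)
  obtain ⟨Cw, hCw⟩ := hpd2cs.exists_bound_of_continuous (pd2_continuous hφ 0 0)
  obtain ⟨Cψ, hCψ⟩ := hφc.exists_bound_of_continuous hφ.continuous
  set χ : ℝ → ℝ := Set.indicator (Set.Icc (-R) R) (fun _ => (1:ℝ)) with hχdef
  have hχi : Integrable χ volume := by
    rw [hχdef]
    refine (integrable_indicator_iff measurableSet_Icc).2 (integrableOn_const ?_)
    simp [Real.volume_Icc]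
  have hχnn : ∀ a, 0 ≤ χ a := fun a => Set.indicator_nonneg (fun _ _ => zero_le_one) a
  have hχ1 : ∀ a : ℝ, |a| < R → χ a = 1 := by
    intro a ha
    have := abs_lt.1 ha
    simp [hχdef, Set.indicator_of_mem, Set.mem_Icc, this.1.le, this.2.le]
  have hGi2 : Integrable G ((volume : Measure ℝ).prod volume) := by
    rw [← MeasureTheory.Measure.volume_eq_prod]
    exact (T2mps.integrable_comp_emb T2.symm.measurableEmbedding).2 hg'i
  have hb1 : ∀ᵐ b : ℝ, Integrable (fun t => G (t, b)) volume := hGi2.prod_left_ae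
  set n : ℝ → ℝ := fun b => ∫ t, ‖G (t, b)‖ with hndef
  have hn_int : Integrable n volume := hGi2.integral_norm_prod_right
  have hnn : ∀ b, 0 ≤ n b := fun b => integral_nonneg fun t => norm_nonneg _
  have hu'sm : StronglyMeasurable (uP R g') := uP_sm R hg'm
  have hCw0 : 0 ≤ Cw := le_trans (norm_nonneg _) (hCw 0)
  -- pointwise bound on uP, given slice integrability
  have huPb : ∀ b : ℝ, Integrable (fun t => G (t, b)) volume →
      ∀ a : ℝ, |a| ≤ R → |uP R g' (a, b)| ≤ 2 * R * n b := by
    intro b hb a ha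
    have h1 : |uP R g' (a, b)| ≤ ∫ t, ‖kern R a t * G (t, b)‖ := by
      rw [← Real.norm_eq_abs]
      exact norm_integral_le_integral_norm _
    refine h1.trans ?_
    have hpt : ∀ t, ‖kern R a t * G (t, b)‖ ≤ 2 * R * ‖G (t, b)‖ := by
      intro t
      rw [norm_mul]
      exact mul_le_mul_of_nonneg_right
        (by simpa [Real.norm_eq_abs] using kern_abs_le t ha) (norm_nonneg _)
    calc ∫ t, ‖kern R a t * G (t, b)‖ ≤ ∫ t, 2 * R * ‖G (t, b)‖ :=
          integral_mono_of_nonneg (Filter.Eventually.of_forall fun t => norm_nonneg _)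
            (hb.norm.const_mul _) (Filter.Eventually.of_forall hpt)
      _ = 2 * R * n b := by rw [hndef]; exact integral_const_mul _ _
  have hI1 : Integrable (fun z => uP R g' z * W z) ((volume : Measure ℝ).prod volume) := by
    have hAE : AEStronglyMeasurable (fun z => uP R g' z * W z)
        ((volume : Measure ℝ).prod volume) :=
      (hu'sm.mul hWc.stronglyMeasurable).aestronglyMeasurable
    apply Integrable.mono' (g := fun z => χ z.1 * (2 * R * Cw * n z.2))
      (hχi.mul_prod (hn_int.const_mul (2 * R * Cw))) hAE
    apply ae_prod_of_ae_right
    filter_upwards [hb1] with b hb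
    intro a
    by_cases hW0 : W (a, b) = 0
    · rw [hW0, mul_zero, norm_zero]
      exact mul_nonneg (hχnn a) (by positivity)
    · have haR : |a| < R := (hWz _ hW0).1
      rw [Real.norm_eq_abs, abs_mul, hχ1 a haR, one_mul]
      have h1 := huPb b hb a haR.le
      have h2 : |W (a, b)| ≤ Cw := by
        simpa [Real.norm_eq_abs, hWdef] using hCw (T2.symm (a, b))
      nlinarith [hnn b, abs_nonneg (uP R g' (a, b)), abs_nonneg (W (a, b)), hR.le]
  have hI2 : Integrable (fun z => G z * ψ z) ((volume : Measure ℝ).prod volume) := by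
    have hAE : AEStronglyMeasurable (fun z => G z * ψ z)
        ((volume : Measure ℝ).prod volume) :=
      (hGsm.mul hψc.stronglyMeasurable).aestronglyMeasurable
    apply Integrable.mono' (hGi2.norm.const_mul Cψ) hAE
    apply Filter.Eventually.of_forall
    intro z
    rw [norm_mul, mul_comm]
    exact mul_le_mul_of_nonneg_right (hCψ _) (norm_nonneg _)
  rw [MeasureTheory.Measure.volume_eq_prod ℝ ℝ]
  rw [integral_prod_symm _ hI1, integral_prod_symm _ hI2]
  apply integral_congr_ae
  filter_upwards [hb1] with b hb
  have e1 : ∀ a : ℝ, uP R g' (a, b) * W (a, b) = ∫ t, kern R a t * G (t, b) * W (a, b) :=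
    fun a => (integral_mul_const _ _).symm
  simp only [e1]
  have hfub : Integrable (Function.uncurry fun a t => kern R a t * G (t, b) * W (a, b))
      ((volume : Measure ℝ).prod volume) := by
    have hm : Measurable (fun z : ℝ × ℝ => kern R z.1 z.2 * G (z.2, b) * W (z.1, b)) := by
      refine Measurable.mul (Measurable.mul ?_ ?_) ?_
      · exact (kern_meas R).comp (measurable_fst.prodMk measurable_snd)
      · exact hGm.comp (measurable_snd.prodMk measurable_const)
      · exact hWc.measurable.comp (measurable_fst.prodMk measurable_const)
    have hAE : AEStronglyMeasurable
        (Function.uncurry fun a t => kern R a t * G (t, b) * W (a, b))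
        ((volume : Measure ℝ).prod volume) := hm.aestronglyMeasurable
    apply Integrable.mono' (g := fun z => χ z.1 * (2 * R * Cw * ‖G (z.2, b)‖))
      (hχi.mul_prod ((hb.norm.const_mul (2 * R * Cw)))) hAE
    apply Filter.Eventually.of_forall
    rintro ⟨a, t⟩
    simp only [Function.uncurry]
    by_cases hW0 : W (a, b) = 0
    · rw [hW0, mul_zero, norm_zero]
      exact mul_nonneg (hχnn a) (by positivity)
    · have haR : |a| < R := (hWz _ hW0).1
      rw [Real.norm_eq_abs, abs_mul, abs_mul, hχ1 a haR, one_mul]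
      have h1 : |kern R a t| ≤ 2 * R := kern_abs_le t haR.le
      have h2 : |W (a, b)| ≤ Cw := by
        simpa [Real.norm_eq_abs, hWdef] using hCw (T2.symm (a, b))
      have h3 : (0:ℝ) ≤ |G (t, b)| := abs_nonneg _
      rw [Real.norm_eq_abs]
      calc |kern R a t| * |G (t, b)| * |W (a, b)|
          ≤ 2 * R * |G (t, b)| * Cw := by
            apply mul_le_mul _ h2 (abs_nonneg _) (mul_nonneg (by linarith) h3)
            exact mul_le_mul_of_nonneg_right h1 h3
        _ = 2 * R * Cw * |G (t, b)| := by ring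
  rw [integral_integral_swap hfub]
  apply integral_congr_ae
  apply Filter.Eventually.of_forall
  intro t
  show (∫ a, kern R a t * G (t, b) * W (a, b)) = G (t, b) * ψ (t, b)
  have e2 : ∫ a, kern R a t * G (t, b) * W (a, b)
      = G (t, b) * ∫ a, kern R a t * W (a, b) := by
    simp_rw [show ∀ a, kern R a t * G (t, b) * W (a, b)
      = G (t, b) * (kern R a t * W (a, b)) from fun a => by ring]
    exact integral_const_mul _ _
  rw [e2]
  by_cases hG0 : G (t, b) = 0
  · rw [hG0, zero_mul, zero_mul]
  · have htR := hGz (t, b) hG0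
    have htlt : t < R := (abs_lt.1 htR.1).2
    have htgt : -R < t := (abs_lt.1 htR.1).1
    congr 1
    -- FTC part
    have hvan : ∀ a, a ∉ Set.Ioc t R → kern R a t * W (a, b) = 0 := by
      intro a ha
      rw [Set.mem_Ioc, not_and_or] at ha
      rcases ha with ha | ha
      · rw [kern_zero_of_le (not_lt.1 ha), zero_mul]
      · have haR : R < a := not_le.1 ha
        by_cases hW0 : W (a, b) = 0
        · rw [hW0, mul_zero]
        · have := (hWz _ hW0).1
          have := (abs_lt.1 this).2
          linarith
    have h3 : ∫ a, kern R a t * W (a, b) = ∫ a in Set.Ioc t R, kern R a t * W (a, b) :=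
      (setIntegral_eq_integral_of_forall_compl_eq_zero hvan).symm
    rw [h3, ← intervalIntegral.integral_of_le htlt.le]
    have hcong : (∫ a in t..R, kern R a t * W (a, b)) = ∫ a in t..R, (a - t) * W (a, b) := by
      apply intervalIntegral.integral_congr
      intro a ha
      rw [Set.uIcc_of_le htlt.le] at ha
      rcases eq_or_lt_of_le ha.1 with heq | hlt
      · rw [← heq]
        simp [kern, Set.mem_Ioo]
      · show kern R a t * W (a, b) = (a - t) * W (a, b)
        unfold kern
        rw [if_pos (Set.mem_Ioo.mpr ⟨htgt, hlt⟩)]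
    rw [hcong]
    set D1 : ℝ → ℝ := fun a => fderiv ℝ φ (T2.symm (a, b)) (EuclideanSpace.single 0 1)
      with hD1def
    have hderiv : ∀ a ∈ Set.uIcc t R,
        HasDerivAt (fun a => (a - t) * D1 a - φ (T2.symm (a, b)))
          ((a - t) * W (a, b)) a := by
      intro a _
      have h1 : HasDerivAt (fun a : ℝ => a - t) 1 a := (hasDerivAt_id a).sub_const t
      have h2 : HasDerivAt D1 (W (a, b)) a :=
        hasDerivAt_slice (dphi_smooth hφ (EuclideanSpace.single 0 1)) b a
      have h3' : HasDerivAt (fun a => φ (T2.symm (a, b))) (D1 a) a := hasDerivAt_slice hφ b a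
      have h4 := (h1.mul h2).sub h3'
      have h5 : (1 * D1 a + (a - t) * W (a, b) - D1 a) = (a - t) * W (a, b) := by ring
      rw [h5] at h4
      exact h4
    have hii : IntervalIntegrable (fun a => (a - t) * W (a, b)) volume t R := by
      apply Continuous.intervalIntegrable
      exact (continuous_id.sub continuous_const).mul
        (hWc.comp (continuous_id.prodMk continuous_const))
    have hFTC := intervalIntegral.integral_eq_sub_of_hasDerivAt hderiv hii
    rw [hFTC]
    have hout : T2.symm (R, b) ∉ tsupport φ := by
      intro hmem
      have := hφsupp _ hmem 0
      rw [T2_symm_coord0] at this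
      simp only [abs_of_pos hR] at this
      exact lt_irrefl R this
    have hD1R : D1 R = 0 := dphi_support hout _
    have hφR : φ (T2.symm (R, b)) = 0 := image_eq_zero_of_notMem_tsupport hout
    rw [hψdef]
    simp [hD1R, hφR]


lemma key (Ω : Set E2) (hΩo : IsOpen Ω) (hΩb : Bornology.IsBounded Ω) :
    ∃ Cb > 0, ∀ g : E2 → ℝ, MemLp g 2 (volume.restrict Ω) →
      ∃ M : Fin 2 → Fin 2 → E2 → ℝ,
        (∀ i j, MemLp (M i j) 2 (volume.restrict Ω)) ∧
        (∀ i j p, M i j p = M j i p) ∧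
        weakDivDiv Ω M g ∧
        (∑ i : Fin 2, ∑ j : Fin 2, ∫ p in Ω, (M i j p) ^ 2)
          ≤ Cb * ∫ p in Ω, (g p) ^ 2 := by
  classical
  obtain ⟨r, hr⟩ := hΩb.subset_closedBall 0
  set R : ℝ := max r 0 + 1 with hRdef
  have hR : 0 < R := by
    have : (0:ℝ) ≤ max r 0 := le_max_right r 0
    linarith
  have hbox : ∀ x ∈ Ω, ∀ i : Fin 2, |x i| < R := by
    intro x hx i
    have h1 : ‖x‖ ≤ r := by
      have := hr hx
      rwa [Metric.mem_closedBall, dist_zero_right] at this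
    have h2 := abs_coord_le x i
    have h3 : r ≤ max r 0 := le_max_left r 0
    rw [hRdef]; linarith
  refine ⟨16 * R ^ 4, by positivity, ?_⟩
  intro g hg
  have hΩm := hΩo.measurableSet
  set g₀ : E2 → ℝ := hg.1.mk g with hg₀def
  have hg₀sm : StronglyMeasurable g₀ := hg.1.stronglyMeasurable_mk
  have hae : g =ᵐ[volume.restrict Ω] g₀ := hg.1.ae_eq_mk
  have hg₀mem : MemLp g₀ 2 (volume.restrict Ω) := (memLp_congr_ae hae).1 hg
  set g' : E2 → ℝ := Ω.indicator g₀ with hg'def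
  have hg'sm : StronglyMeasurable g' := hg₀sm.indicator hΩm
  have hg'mem : MemLp g' 2 volume := (memLp_indicator_iff_restrict hΩm).2 hg₀mem
  haveI hfin : IsFiniteMeasure (volume.restrict Ω) :=
    ⟨by rw [Measure.restrict_apply_univ]; exact hΩb.measure_lt_top⟩
  have hg'i : Integrable g' volume := by
    refine (integrable_indicator_iff hΩm).2 ?_
    exact hg₀mem.integrable (by norm_num)
  have hg'sq : Integrable (fun x => g' x ^ 2) volume := hg'mem.integrable_sq
  have hg'supp : ∀ x : E2, g' x ≠ 0 → ∀ i : Fin 2, |x i| < R := by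
    intro x hx i
    have hxΩ : x ∈ Ω := by
      by_contra hxm; exact hx (Set.indicator_of_notMem hxm _)
    exact hbox x hxΩ i
  set u : E2 → ℝ := fun x => uP R g' (T2 x) with hudef
  have husm : StronglyMeasurable u := (uP_sm R hg'sm).comp_measurable T2.measurable
  set G : ℝ × ℝ → ℝ := Gfun g' with hGdef
  have hGm : Measurable G := hg'sm.measurable.comp T2.symm.measurable
  have hGi2 : Integrable G ((volume : Measure ℝ).prod volume) := by
    rw [← MeasureTheory.Measure.volume_eq_prod]
    exact (T2mps.integrable_comp_emb T2.symm.measurableEmbedding).2 hg'i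
  have hG2i : Integrable (fun z => G z ^ 2) ((volume : Measure ℝ).prod volume) := by
    rw [← MeasureTheory.Measure.volume_eq_prod]
    exact (T2mps.integrable_comp_emb T2.symm.measurableEmbedding).2 hg'sq
  have hb1 : ∀ᵐ b : ℝ, Integrable (fun t => G (t, b)) volume := hGi2.prod_left_ae
  have hb2 : ∀ᵐ b : ℝ, Integrable (fun t => G (t, b) ^ 2) volume := hG2i.prod_left_ae
  set m : ℝ → ℝ := fun b => ∫ t, G (t, b) ^ 2 with hmdef
  have hm_int : Integrable m volume := by
    apply (hG2i.integral_norm_prod_right).congr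
    apply Filter.Eventually.of_forall
    intro b
    apply integral_congr_ae
    apply Filter.Eventually.of_forall
    intro t
    show ‖G (t, b) ^ 2‖ = G (t, b) ^ 2
    exact abs_of_nonneg (sq_nonneg _)
  have hm_nn : ∀ b, 0 ≤ m b := fun b => integral_nonneg fun t => sq_nonneg _
  set χ : ℝ → ℝ := Set.indicator (Set.Icc (-R) R) (fun _ => (1:ℝ)) with hχdef
  have hχi : Integrable χ volume := by
    rw [hχdef]
    refine (integrable_indicator_iff measurableSet_Icc).2 (integrableOn_const ?_)
    simp [Real.volume_Icc]
  have hχnn : ∀ a, 0 ≤ χ a := fun a => Set.indicator_nonneg (fun _ _ => zero_le_one) a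
  have hχ1 : ∀ a : ℝ, |a| < R → χ a = 1 := by
    intro a ha
    have := abs_lt.1 ha
    simp [hχdef, Set.indicator_of_mem, Set.mem_Icc, this.1.le, this.2.le]
  have hχint : (∫ t, χ t) = 2 * R := by
    rw [hχdef, integral_indicator_const (1:ℝ) measurableSet_Icc]
    rw [Real.volume_real_Icc_of_le (by linarith), smul_eq_mul, mul_one]
    ring
  -- the crucial slice estimate
  have hCS : ∀ᵐ b : ℝ, ∀ a : ℝ, |a| < R → uP R g' (a, b) ^ 2 ≤ 8 * R ^ 3 * m b := by
    filter_upwards [hb1, hb2] with b hb1b hb2b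
    intro a ha
    set nb : ℝ := ∫ t, ‖G (t, b)‖ with hnbdef
    have hnbnn : 0 ≤ nb := integral_nonneg fun t => norm_nonneg _
    have hGslice : Measurable (fun t => G (t, b)) :=
      hGm.comp (measurable_id.prodMk measurable_const)
    have hub : |uP R g' (a, b)| ≤ 2 * R * nb := by
      have h1 : |uP R g' (a, b)| ≤ ∫ t, ‖kern R a t * G (t, b)‖ := by
        rw [← Real.norm_eq_abs]
        exact norm_integral_le_integral_norm _
      refine h1.trans ?_
      have hpt : ∀ t, ‖kern R a t * G (t, b)‖ ≤ 2 * R * ‖G (t, b)‖ := by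
        intro t
        rw [norm_mul]
        exact mul_le_mul_of_nonneg_right
          (by simpa [Real.norm_eq_abs] using kern_abs_le t ha.le) (norm_nonneg _)
      calc ∫ t, ‖kern R a t * G (t, b)‖ ≤ ∫ t, 2 * R * ‖G (t, b)‖ :=
            integral_mono_of_nonneg (Filter.Eventually.of_forall fun t => norm_nonneg _)
              (hb1b.norm.const_mul _) (Filter.Eventually.of_forall hpt)
        _ = 2 * R * nb := integral_const_mul _ _
    have hof2 : ENNReal.ofReal (2:ℝ) = 2 := by norm_num [ENNReal.ofReal_ofNat]
    have hχ2 : MemLp χ (ENNReal.ofReal (2:ℝ)) volume := by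
      rw [hof2, hχdef]
      exact memLp_indicator_const 2 measurableSet_Icc 1 (Or.inr (by simp [Real.volume_Icc]))
    have habs : MemLp (fun t => |G (t, b)|) (ENNReal.ofReal (2:ℝ)) volume := by
      rw [hof2]
      have h2 : MemLp (fun t => G (t, b)) 2 volume :=
        (memLp_two_iff_integrable_sq hGslice.aestronglyMeasurable).2 hb2b
      simpa [Real.norm_eq_abs] using h2.norm
    have hH := integral_mul_le_Lp_mul_Lq_of_nonneg (μ := (volume : Measure ℝ))
      (p := 2) (q := 2) ⟨by norm_num, by norm_num, by norm_num⟩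
      (Filter.Eventually.of_forall hχnn)
      (Filter.Eventually.of_forall fun t => abs_nonneg _) hχ2 habs
    have e1 : ∫ t, χ t * |G (t, b)| = nb := by
      rw [hnbdef]
      apply integral_congr_ae
      apply Filter.Eventually.of_forall
      intro t
      show χ t * |G (t, b)| = ‖G (t, b)‖
      by_cases hG0 : G (t, b) = 0
      · simp [hG0]
      · have htR : |t| < R := by simpa [T2_symm_coord0] using hg'supp _ hG0 0
        rw [hχ1 t htR, one_mul, Real.norm_eq_abs]
    have e2 : (∫ t, χ t ^ (2:ℝ)) = 2 * R := by
      have hpteq : ∀ t, χ t ^ (2:ℝ) = χ t := by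
        intro t
        by_cases hmem : t ∈ Set.Icc (-R) R
        · simp [hχdef, Set.indicator_of_mem hmem]
        · simp [hχdef, Set.indicator_of_notMem hmem, Real.zero_rpow (by norm_num : (2:ℝ) ≠ 0)]
      simp only [hpteq]
      exact hχint
    have e3 : (∫ t, |G (t, b)| ^ (2:ℝ)) = m b := by
      have hpteq : ∀ t, |G (t, b)| ^ (2:ℝ) = G (t, b) ^ 2 := by
        intro t
        rw [show (2:ℝ) = ((2:ℕ):ℝ) by norm_num, Real.rpow_natCast, sq_abs]
      simp only [hpteq]
      rfl
    rw [e1, e2, e3] at hH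
    have hs2 : ((2*R) ^ ((1:ℝ)/2) * (m b) ^ ((1:ℝ)/2)) ^ 2 = 2 * R * m b := by
      rw [mul_pow, ← Real.rpow_natCast ((2*R) ^ ((1:ℝ)/2)) 2,
        ← Real.rpow_natCast ((m b) ^ ((1:ℝ)/2)) 2,
        ← Real.rpow_mul (by linarith : (0:ℝ) ≤ 2*R), ← Real.rpow_mul (hm_nn b)]
      norm_num
    have hsnn : 0 ≤ (2*R) ^ ((1:ℝ)/2) * (m b) ^ ((1:ℝ)/2) :=
      mul_nonneg (Real.rpow_nonneg (by linarith) _) (Real.rpow_nonneg (hm_nn b) _)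
    have h6 : nb ^ 2 ≤ 2 * R * m b := by
      calc nb ^ 2 ≤ ((2*R) ^ ((1:ℝ)/2) * (m b) ^ ((1:ℝ)/2)) ^ 2 :=
            pow_le_pow_left₀ hnbnn hH 2
        _ = 2 * R * m b := hs2
    have h7 : uP R g' (a, b) ^ 2 ≤ 4 * R ^ 2 * nb ^ 2 := by
      nlinarith [sq_abs (uP R g' (a, b)),
        mul_self_le_mul_self (abs_nonneg (uP R g' (a, b))) hub, hR.le, hnbnn]
    calc uP R g' (a, b) ^ 2 ≤ 4 * R ^ 2 * nb ^ 2 := h7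
      _ ≤ 4 * R ^ 2 * (2 * R * m b) := mul_le_mul_of_nonneg_left h6 (by positivity)
      _ = 8 * R ^ 3 * m b := by ring
  -- the set ΩP and the indicator function
  set ΩP : Set (ℝ × ℝ) := T2.symm ⁻¹' Ω with hΩPdef
  have hΩPm : MeasurableSet ΩP := T2.symm.measurable hΩm
  set F : ℝ × ℝ → ℝ := fun z => Set.indicator ΩP (fun w => uP R g' w ^ 2) z with hFdef
  set D : ℝ × ℝ → ℝ := fun z => χ z.1 * (8 * R ^ 3 * m z.2) with hDdef
  have hDi : Integrable D ((volume : Measure ℝ).prod volume) :=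
    hχi.mul_prod (hm_int.const_mul _)
  have hFbd : ∀ᵐ z : ℝ × ℝ ∂((volume : Measure ℝ).prod volume), ‖F z‖ ≤ D z := by
    apply ae_prod_of_ae_right
    filter_upwards [hCS] with b hCSb
    intro a
    by_cases hmem : (a, b) ∈ ΩP
    · have hcoord : |a| < R := by
        have := hbox _ hmem 0
        rwa [T2_symm_coord0] at this
      rw [hFdef]
      simp only [Set.indicator_of_mem hmem]
      rw [Real.norm_eq_abs, abs_of_nonneg (sq_nonneg _), hDdef]
      show uP R g' (a, b) ^ 2 ≤ χ a * (8 * R ^ 3 * m b)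
      rw [hχ1 a hcoord, one_mul]
      exact hCSb a hcoord
    · rw [hFdef]
      simp only [Set.indicator_of_notMem hmem]
      rw [norm_zero, hDdef]
      exact mul_nonneg (hχnn a) (by positivity)
  have hFsm : AEStronglyMeasurable F ((volume : Measure ℝ).prod volume) := by
    apply Measurable.aestronglyMeasurable
    exact (((uP_sm R hg'sm).measurable.pow_const 2).indicator hΩPm)
  have hFi : Integrable F ((volume : Measure ℝ).prod volume) :=
    Integrable.mono' hDi hFsm hFbd
  have hFleD : (∫ z, F z ∂((volume : Measure ℝ).prod volume))
      ≤ ∫ z, D z ∂((volume : Measure ℝ).prod volume) := by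
    apply integral_mono_ae hFi hDi
    filter_upwards [hFbd] with z hz
    calc F z ≤ ‖F z‖ := le_abs_self _
      _ ≤ D z := hz
  have hDval : (∫ z, D z ∂((volume : Measure ℝ).prod volume))
      = 16 * R ^ 4 * ∫ z, G z ^ 2 ∂((volume : Measure ℝ).prod volume) := by
    rw [hDdef]
    rw [integral_prod_mul (f := χ) (g := fun b => 8 * R ^ 3 * m b)]
    rw [hχint, integral_const_mul]
    have : (∫ b, m b) = ∫ z, G z ^ 2 ∂((volume : Measure ℝ).prod volume) :=
      (integral_prod_symm _ hG2i).symm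
    rw [this]; ring
  have hcompeq : ∀ x : E2, F (T2 x) = Set.indicator Ω (fun p => u p ^ 2) x := by
    intro x
    by_cases hx : x ∈ Ω
    · have hmem : T2 x ∈ ΩP := by
        rw [hΩPdef]
        simp [Set.mem_preimage, MeasurableEquiv.symm_apply_apply, hx]
      rw [hFdef]
      simp only [Set.indicator_of_mem hmem, Set.indicator_of_mem hx]
      rfl
    · have hmem : T2 x ∉ ΩP := by
        rw [hΩPdef]
        simp [Set.mem_preimage, MeasurableEquiv.symm_apply_apply, hx]
      rw [hFdef]
      simp only [Set.indicator_of_notMem hmem, Set.indicator_of_notMem hx]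
  have htrans : (∫ x : E2, Set.indicator Ω (fun p => u p ^ 2) x)
      = ∫ z, F z ∂((volume : Measure ℝ).prod volume) := by
    rw [← Measure.volume_eq_prod, ← T2mp.integral_comp T2.measurableEmbedding F]
    exact integral_congr_ae (Filter.Eventually.of_forall fun x => (hcompeq x).symm)
  have hGsq_trans : (∫ z, G z ^ 2 ∂((volume : Measure ℝ).prod volume))
      = ∫ p in Ω, (g p) ^ 2 := by
    rw [← Measure.volume_eq_prod]
    have h1 : (∫ z : ℝ × ℝ, G z ^ 2) = ∫ x : E2, g' x ^ 2 :=
      T2mps.integral_comp T2.symm.measurableEmbedding (fun x => g' x ^ 2)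
    rw [h1]
    have h2 : (fun x => g' x ^ 2) = Set.indicator Ω (fun x => g₀ x ^ 2) := by
      funext x
      by_cases hx : x ∈ Ω <;>
        simp [hg'def, Set.indicator_of_mem, Set.indicator_of_notMem, hx]
    rw [h2, integral_indicator hΩm]
    apply integral_congr_ae
    filter_upwards [hae] with p hp
    rw [hp]
  have hbound : (∫ p in Ω, u p ^ 2) ≤ 16 * R ^ 4 * ∫ p in Ω, (g p) ^ 2 := by
    conv_lhs => rw [← integral_indicator hΩm]
    rw [htrans, ← hGsq_trans]
    calc (∫ z, F z ∂((volume : Measure ℝ).prod volume))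
        ≤ ∫ z, D z ∂((volume : Measure ℝ).prod volume) := hFleD
      _ = _ := hDval
  have humem : MemLp u 2 (volume.restrict Ω) := by
    apply (memLp_two_iff_integrable_sq (husm.aestronglyMeasurable.restrict)).2
    have h1 : Integrable (F ∘ T2) volume := by
      refine (T2mp.integrable_comp_emb T2.measurableEmbedding).2 ?_
      rw [Measure.volume_eq_prod]; exact hFi
    have h2 : Integrable (Set.indicator Ω (fun p => u p ^ 2)) volume :=
      h1.congr (Filter.Eventually.of_forall fun x => hcompeq x)
    exact (integrable_indicator_iff hΩm).1 h2
  -- assemble M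
  refine ⟨fun i j p => if i = 0 ∧ j = 0 then u p else 0, ?_, ?_, ?_, ?_⟩
  · intro i j
    by_cases h : i = 0 ∧ j = 0
    · simpa [h] using humem
    · simpa [h] using (memLp_const (0:ℝ) : MemLp (fun _ : E2 => (0:ℝ)) 2 (volume.restrict Ω))
  · intro i j p
    by_cases h1 : i = 0 <;> by_cases h2 : j = 0 <;> simp [h1, h2]
  · intro φ hφ hφc hφsub
    have hφsupp : ∀ x ∈ tsupport φ, ∀ i : Fin 2, |x i| < R :=
      fun x hx i => hbox x (hφsub hx) i
    show (∑ i : Fin 2, ∑ j : Fin 2,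
        ∫ p in Ω, (if i = 0 ∧ j = 0 then u p else 0) * pd2 φ i j p)
        = ∫ p in Ω, g p * φ p
    have hsum : (∑ i : Fin 2, ∑ j : Fin 2,
        ∫ p in Ω, (if i = 0 ∧ j = 0 then u p else 0) * pd2 φ i j p)
        = ∫ p in Ω, u p * pd2 φ 0 0 p := by
      rw [Fin.sum_univ_two, Fin.sum_univ_two, Fin.sum_univ_two]
      norm_num
    rw [hsum]
    have h0 : (∫ p in Ω, u p * pd2 φ 0 0 p) = ∫ p : E2, u p * pd2 φ 0 0 p := by
      apply setIntegral_eq_integral_of_forall_compl_eq_zero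
      intro x hx
      rw [pd2_zero_of_nmem (fun hmem => hx (hφsub hmem)) 0 0, mul_zero]
    have h1 : (∫ p : E2, u p * pd2 φ 0 0 p)
        = ∫ z : ℝ × ℝ, uP R g' z * pd2 φ 0 0 (T2.symm z) := by
      rw [← T2mps.integral_comp T2.symm.measurableEmbedding
        (fun p => u p * pd2 φ 0 0 p)]
      apply integral_congr_ae
      apply Filter.Eventually.of_forall
      intro z
      rw [hudef]
      simp [MeasurableEquiv.apply_symm_apply]
    have h2 := rep R hR g' hg'sm hg'i hg'supp φ hφ hφc hφsupp
    have h3 : (∫ z : ℝ × ℝ, Gfun g' z * φ (T2.symm z)) = ∫ p : E2, g' p * φ p :=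
      T2mps.integral_comp T2.symm.measurableEmbedding (fun p => g' p * φ p)
    have h4 : (∫ p : E2, g' p * φ p) = ∫ p in Ω, g p * φ p := by
      have e : (fun p => g' p * φ p) = Set.indicator Ω (fun p => g₀ p * φ p) := by
        funext p
        by_cases hp : p ∈ Ω <;>
          simp [hg'def, Set.indicator_of_mem, Set.indicator_of_notMem, hp]
      rw [e, integral_indicator hΩm]
      apply integral_congr_ae
      filter_upwards [hae] with p hp
      rw [hp]
    rw [h0, h1, h2, h3, h4]
  · show (∑ i : Fin 2, ∑ j : Fin 2,
        ∫ p in Ω, ((if i = 0 ∧ j = 0 then u p else 0)) ^ 2)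
        ≤ 16 * R ^ 4 * ∫ p in Ω, (g p) ^ 2
    have hsum : (∑ i : Fin 2, ∑ j : Fin 2,
        ∫ p in Ω, ((if i = 0 ∧ j = 0 then u p else 0)) ^ 2)
        = ∫ p in Ω, u p ^ 2 := by
      rw [Fin.sum_univ_two, Fin.sum_univ_two, Fin.sum_univ_two]
      norm_num
    rw [hsum]
    exact hbound


end DivDivAux

/- STATEMENT 13 (surjectivity of `div div : H(div div,Ω;𝕊) → L²(Ω)` and the
resulting inf-sup condition; the inf-sup verification inside the proof of
Theorem 3.7).  `Ω ⊂ ℝ²` is a bounded (simply connected Lipschitz) domain —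
formalized as a bounded nonempty open set, which is what the proof uses; a
symmetric tensor field `M ∈ H(div div,Ω;𝕊)` is encoded by its entries
`M i j ∈ L²(Ω)` with `M i j = M j i` together with `div div M ∈ L²(Ω)` in the
distributional sense (`weakDivDiv`), and
`‖M‖²_{divdiv} = ‖M‖²_{L²} + ‖div div M‖²_{L²}`.
Conclusions: (1) every `g ∈ L²(Ω)` is `div div M` for some symmetric
`M ∈ L²(Ω;𝕊)` with `‖M‖_{L²} ≤ C_b ‖g‖` (via `M = D²v_g`, `Δ²v_g = g`,
`v_g ∈ H²₀(Ω)`); (2) consequently there is `c_is > 0` with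
`sup_{‖Q‖_{divdiv} = 1} (div div Q, v) ≥ c_is ‖v‖` for all `v ∈ L²(Ω)`. -/
theorem divdiv_surjective_and_infsup
    (Ω : Set E2) (hΩo : IsOpen Ω) (hΩb : Bornology.IsBounded Ω)
    (hΩne : Ω.Nonempty) :
    -- (1) surjectivity with bound
    (∃ Cb > 0, ∀ g : E2 → ℝ, MemLp g 2 (volume.restrict Ω) →
      ∃ M : Fin 2 → Fin 2 → E2 → ℝ,
        (∀ i j, MemLp (M i j) 2 (volume.restrict Ω)) ∧
        (∀ i j p, M i j p = M j i p) ∧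
        weakDivDiv Ω M g ∧
        (∑ i : Fin 2, ∑ j : Fin 2, ∫ p in Ω, (M i j p) ^ 2)
          ≤ Cb * ∫ p in Ω, (g p) ^ 2) ∧
    -- (2) inf-sup condition
    (∃ c_is > 0, ∀ v : E2 → ℝ, MemLp v 2 (volume.restrict Ω) →
      c_is * (∫ p in Ω, (v p) ^ 2) ^ (1/2 : ℝ) ≤
        sSup {r : ℝ | ∃ (M : Fin 2 → Fin 2 → E2 → ℝ) (g : E2 → ℝ),
          (∀ i j, MemLp (M i j) 2 (volume.restrict Ω)) ∧
          (∀ i j p, M i j p = M j i p) ∧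
          MemLp g 2 (volume.restrict Ω) ∧
          weakDivDiv Ω M g ∧
          (∑ i : Fin 2, ∑ j : Fin 2, ∫ p in Ω, (M i j p) ^ 2)
            + (∫ p in Ω, (g p) ^ 2) = 1 ∧
          r = ∫ p in Ω, g p * v p}) := by
  obtain ⟨Cb, hCb, hsurj⟩ := DivDivAux.key Ω hΩo hΩb
  refine ⟨⟨Cb, hCb, hsurj⟩, ?_⟩
  set c : ℝ := ((Cb + 1) ^ ((1:ℝ)/2))⁻¹ with hcdef
  have hc : 0 < c := inv_pos.2 (Real.rpow_pos_of_pos (by linarith) _)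
  refine ⟨c, hc, ?_⟩
  intro v hv
  set S : Set ℝ := {r : ℝ | ∃ (M : Fin 2 → Fin 2 → E2 → ℝ) (g : E2 → ℝ),
          (∀ i j, MemLp (M i j) 2 (volume.restrict Ω)) ∧
          (∀ i j p, M i j p = M j i p) ∧
          MemLp g 2 (volume.restrict Ω) ∧
          weakDivDiv Ω M g ∧
          (∑ i : Fin 2, ∑ j : Fin 2, ∫ p in Ω, (M i j p) ^ 2)
            + (∫ p in Ω, (g p) ^ 2) = 1 ∧
          r = ∫ p in Ω, g p * v p} with hSdef
  set I : ℝ := ∫ p in Ω, (v p) ^ 2 with hIdef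
  have hInn : 0 ≤ I := integral_nonneg fun p => sq_nonneg _
  have hub : ∀ r ∈ S, r ≤ I ^ ((1:ℝ)/2) := by
    rintro r ⟨M, g, hM, hsym, hgmem, hwdd, hnorm, hr⟩
    have h1 := DivDivAux.cs (volume.restrict Ω) g v hgmem hv
    have hg2nn : 0 ≤ ∫ p in Ω, (g p) ^ 2 := integral_nonneg fun p => sq_nonneg _
    have hsumnn : 0 ≤ ∑ i : Fin 2, ∑ j : Fin 2, ∫ p in Ω, (M i j p) ^ 2 :=
      Finset.sum_nonneg fun i _ => Finset.sum_nonneg fun j _ =>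
        integral_nonneg fun p => sq_nonneg _
    have hg2le1 : (∫ p in Ω, (g p) ^ 2) ≤ 1 := by linarith
    have h2 : ((∫ p in Ω, (g p) ^ 2)) ^ ((1:ℝ)/2) ≤ 1 :=
      Real.rpow_le_one hg2nn hg2le1 (by norm_num)
    calc r = ∫ p in Ω, g p * v p := hr
      _ ≤ ((∫ p in Ω, (g p) ^ 2)) ^ ((1:ℝ)/2) * I ^ ((1:ℝ)/2) := by
          simpa [hIdef] using h1
      _ ≤ 1 * I ^ ((1:ℝ)/2) :=
          mul_le_mul_of_nonneg_right h2 (Real.rpow_nonneg hInn _)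
      _ = I ^ ((1:ℝ)/2) := one_mul _
  have hBdd : BddAbove S := ⟨I ^ ((1:ℝ)/2), fun r hr => hub r hr⟩
  by_cases hI0 : I = 0
  · have hI12 : I ^ ((1:ℝ)/2) = 0 := by
      rw [hI0]; exact Real.zero_rpow (by norm_num)
    rw [hI12, mul_zero]
    rcases Set.eq_empty_or_nonempty S with hS | ⟨r, hr⟩
    · rw [hS, Real.sSup_empty]
    · have hrle : r ≤ 0 := by
        have := hub r hr; rwa [hI12] at this
      have hneg : -r ∈ S := by
        obtain ⟨M, g, hM, hsym, hgmem, hwdd, hnorm, hreq⟩ := hr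
        refine ⟨fun i j p => -(M i j p), fun p => -(g p), ?_, ?_, ?_, ?_, ?_, ?_⟩
        · intro i j
          have : MemLp (fun p => -(M i j p)) 2 (volume.restrict Ω) := (hM i j).neg
          exact this
        · intro i j p; simp [hsym i j p]
        · have : MemLp (fun p => -(g p)) 2 (volume.restrict Ω) := hgmem.neg
          exact this
        · intro φ h1 h2 h3
          have hw := hwdd φ h1 h2 h3
          simp only [neg_mul, integral_neg, Finset.sum_neg_distrib]
          rw [hw]
        · simp only [neg_sq]
          exact hnorm
        · rw [hreq]; simp [neg_mul, integral_neg]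
      have h2 : 0 ≤ -r := by linarith
      calc (0:ℝ) ≤ -r := h2
        _ ≤ sSup S := le_csSup hBdd hneg
  · have hIpos : 0 < I := lt_of_le_of_ne hInn (Ne.symm hI0)
    obtain ⟨M, hM, hsym, hwdd, hbound⟩ := hsurj v hv
    set Ssum : ℝ := ∑ i : Fin 2, ∑ j : Fin 2, ∫ p in Ω, (M i j p) ^ 2 with hSs
    have hSsnn : 0 ≤ Ssum :=
      Finset.sum_nonneg fun i _ => Finset.sum_nonneg fun j _ =>
        integral_nonneg fun p => sq_nonneg _
    set N : ℝ := (Ssum + I) ^ ((1:ℝ)/2) with hNdef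
    have hNpos : 0 < N := Real.rpow_pos_of_pos (by linarith) _
    have hN2 : N ^ 2 = Ssum + I := by
      rw [hNdef, ← Real.rpow_natCast ((Ssum + I) ^ ((1:ℝ)/2)) 2,
        ← Real.rpow_mul (by linarith)]
      norm_num
    have hvv : (∫ p in Ω, v p * v p) = I := by
      rw [hIdef]
      apply integral_congr_ae
      apply Filter.Eventually.of_forall
      intro p
      show v p * v p = v p ^ 2
      exact (pow_two (v p)).symm
    have hmem : (N⁻¹ * I) ∈ S := by
      refine ⟨fun i j p => N⁻¹ * M i j p, fun p => N⁻¹ * v p, ?_, ?_, ?_, ?_, ?_, ?_⟩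
      · intro i j; exact (hM i j).const_mul _
      · intro i j p
        show N⁻¹ * M i j p = N⁻¹ * M j i p
        rw [hsym i j p]
      · exact hv.const_mul _
      · intro φ h1 h2 h3
        have hw := hwdd φ h1 h2 h3
        have lhs : (∑ i : Fin 2, ∑ j : Fin 2,
            ∫ p in Ω, (N⁻¹ * M i j p) * pd2 φ i j p)
            = N⁻¹ * ∑ i : Fin 2, ∑ j : Fin 2, ∫ p in Ω, M i j p * pd2 φ i j p := by
          simp_rw [mul_assoc, integral_const_mul, ← Finset.mul_sum]
        have rhs : (∫ p in Ω, (N⁻¹ * v p) * φ p) = N⁻¹ * ∫ p in Ω, v p * φ p := by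
          simp_rw [mul_assoc, integral_const_mul]
        rw [lhs, rhs, hw]
      · calc (∑ i : Fin 2, ∑ j : Fin 2, ∫ p in Ω, (N⁻¹ * M i j p) ^ 2)
            + ∫ p in Ω, (N⁻¹ * v p) ^ 2
            = N⁻¹ ^ 2 * Ssum + N⁻¹ ^ 2 * I := by
              rw [hSs, hIdef]
              simp_rw [mul_pow, integral_const_mul, ← Finset.mul_sum]
          _ = N⁻¹ ^ 2 * (Ssum + I) := by ring
          _ = 1 := by
              rw [← hN2]
              field_simp
      · rw [show (∫ p in Ω, (N⁻¹ * v p) * v p) = N⁻¹ * ∫ p in Ω, v p * v p by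
          simp_rw [mul_assoc, integral_const_mul], hvv]
    have hle : N⁻¹ * I ≤ sSup S := le_csSup hBdd hmem
    have hNle : N ≤ (Cb + 1) ^ ((1:ℝ)/2) * I ^ ((1:ℝ)/2) := by
      rw [hNdef, ← Real.mul_rpow (by linarith) hInn]
      apply Real.rpow_le_rpow (by linarith) ?_ (by norm_num)
      calc Ssum + I ≤ Cb * I + I := by linarith [hbound]
        _ = (Cb + 1) * I := by ring
    have hfin : c * I ^ ((1:ℝ)/2) ≤ N⁻¹ * I := by
      have hPpos : 0 < (Cb + 1) ^ ((1:ℝ)/2) := Real.rpow_pos_of_pos (by linarith) _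
      have hJpos : 0 < I ^ ((1:ℝ)/2) := Real.rpow_pos_of_pos hIpos _
      have hJJ : I ^ ((1:ℝ)/2) * I ^ ((1:ℝ)/2) = I := by
        rw [← Real.rpow_add hIpos]; norm_num
      have h1 : ((Cb + 1) ^ ((1:ℝ)/2) * I ^ ((1:ℝ)/2))⁻¹ ≤ N⁻¹ :=
        inv_anti₀ hNpos hNle
      have hJne : I ^ ((1:ℝ)/2) ≠ 0 := ne_of_gt hJpos
      have h2 : (I ^ ((1:ℝ)/2))⁻¹ * I = I ^ ((1:ℝ)/2) := by
        rw [inv_mul_eq_iff_eq_mul₀ hJne]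
        exact hJJ.symm
      calc c * I ^ ((1:ℝ)/2)
          = ((Cb + 1) ^ ((1:ℝ)/2))⁻¹ * ((I ^ ((1:ℝ)/2))⁻¹ * I) := by
            rw [h2, hcdef]
          _ = ((Cb + 1) ^ ((1:ℝ)/2) * I ^ ((1:ℝ)/2))⁻¹ * I := by
            rw [mul_inv, mul_assoc]
          _ ≤ N⁻¹ * I := mul_le_mul_of_nonneg_right h1 hInn
    exact hfin.trans hle


end
end

section
/- Let T be a triangle and v ∈ P⁴_b(T) = span{ψ_j := λ_j λ₁λ₂λ₃ : j=1,2,3}, v = Σ c_j ψ_j. Then on edge E_k (opposite vertex x_k), the gradient satisfies ∇v|_{E_k} = (c_{k+1}λ_{k+1} + c_{k+2}λ_{k+2}) λ_{k+1}λ_{k+2} ∇λ_k, and consequently ∫_{E_k} ∂_n v = 0 for all k ∈ {1,2,3} if and only if c_k + c_{k+1} = 0 for all k (indices mod 3), which forces c₁ = c₂ = c₃ = 0. Hence the edge means of the normal derivative form a unisolvent set of degrees of freedom for P⁴_b(T). -/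
open scoped RealInnerProductSpace

noncomputable section

/-- In the plane, two nonzero vectors orthogonal to the same nonzero vector
have nonzero inner product. -/
lemma plane_inner_ne_zero (d u w : E2) (hd : d ≠ 0) (hu : u ≠ 0) (hw : w ≠ 0)
    (hud : ⟪u, d⟫ = 0) (hwd : ⟪w, d⟫ = 0) : ⟪u, w⟫ ≠ 0 := by
  have hcoord : ∀ y z : E2, ⟪y, z⟫ = y 0 * z 0 + y 1 * z 1 := by
    intro y z
    simp [PiLp.inner_apply, Fin.sum_univ_two, RCLike.inner_apply, mul_comm]
  have hne : ∀ y : E2, y ≠ 0 → y 0 ≠ 0 ∨ y 1 ≠ 0 := by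
    intro y hy
    by_contra h
    push_neg at h
    apply hy
    ext i
    fin_cases i <;> simp [h.1, h.2]
  rw [hcoord] at hud hwd ⊢
  intro h
  have hdd : d 0 ^ 2 + d 1 ^ 2 ≠ 0 := by
    rcases hne d hd with h' | h' <;> positivity
  have hdet : w 0 * d 1 - w 1 * d 0 = 0 := by
    rcases hne u hu with h' | h'
    · have : u 0 * (w 0 * d 1 - w 1 * d 0) = 0 := by linear_combination d 1 * h - w 1 * hud
      rcases mul_eq_zero.mp this with h'' | h'' ; · exact absurd h'' h'
      exact h''
    · have : u 1 * (w 0 * d 1 - w 1 * d 0) = 0 := by linear_combination w 0 * hud - d 0 * h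
      rcases mul_eq_zero.mp this with h'' | h'' ; · exact absurd h'' h'
      exact h''
  have hw0 : w 0 * (d 0 ^ 2 + d 1 ^ 2) = 0 := by linear_combination d 0 * hwd + d 1 * hdet
  have hw1 : w 1 * (d 0 ^ 2 + d 1 ^ 2) = 0 := by linear_combination d 1 * hwd - d 0 * hdet
  rcases hne w hw with h' | h'
  · exact h' (by rcases mul_eq_zero.mp hw0 with h'' | h''; exact h''; exact absurd h'' hdd)
  · exact h' (by rcases mul_eq_zero.mp hw1 with h'' | h''; exact h''; exact absurd h'' hdd)

/-- The basic edge quadrature: `∫₀¹ (A(1-t)+Bt)(1-t)t dt = (A+B)/12`. -/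
lemma bubble_poly_integral (A B : ℝ) :
    (∫ t in (0:ℝ)..1, (A*(1-t)+B*t)*((1-t)*t)) = (A+B)/12 := by
  have h : (fun t : ℝ => (A*(1-t)+B*t)*((1-t)*t))
      = fun t : ℝ => A*t^1 + ((B-2*A)*t^2 + (A-B)*t^3) := funext fun t => by ring
  rw [h]
  have i1 : IntervalIntegrable (fun t : ℝ => A*t^1) MeasureTheory.volume 0 1 :=
    (by continuity : Continuous fun t : ℝ => A*t^1).intervalIntegrable 0 1
  have i2 : IntervalIntegrable (fun t : ℝ => (B-2*A)*t^2) MeasureTheory.volume 0 1 :=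
    (by continuity : Continuous fun t : ℝ => (B-2*A)*t^2).intervalIntegrable 0 1
  have i3 : IntervalIntegrable (fun t : ℝ => (A-B)*t^3) MeasureTheory.volume 0 1 :=
    (by continuity : Continuous fun t : ℝ => (A-B)*t^3).intervalIntegrable 0 1
  rw [intervalIntegral.integral_add i1 (i2.add i3), intervalIntegral.integral_add i2 i3,
    intervalIntegral.integral_const_mul, intervalIntegral.integral_const_mul,
    intervalIntegral.integral_const_mul, integral_pow, integral_pow, integral_pow]
  norm_num
  ring

/- STATEMENT 15 (the core computation in the proof of Lemma 3.10:
edge gradient of quartic bubbles and unisolvence of the normal-derivative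
edge means on `P⁴_b(T)`).
`T` is the nondegenerate triangle with vertices `x 0, x 1, x 2`; `lam j` are
the barycentric coordinates (affine, `lam j (x i) = δ_ij`,
`λ₀ + λ₁ + λ₂ = 1`), `E_k` is the edge opposite `x k`, parametrized by
`t ↦ x (k+1) + t•(x (k+2) − x (k+1))` and characterized by `λ_k = 0`;
`n k` is a nonzero normal vector of `E_k`.  With
`ψ_j = λ_j·λ₀λ₁λ₂` and `v = Σ c_j ψ_j ∈ P⁴_b(T)`:
(i) on `E_k` the gradient satisfies
    `∇v = (c_{k+1}λ_{k+1} + c_{k+2}λ_{k+2})·λ_{k+1}λ_{k+2}·∇λ_k`;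
(ii) for each `k`, `∫_{E_k} ∂_n v = 0` iff `c_{k+1} + c_{k+2} = 0`
    (the linear factor vanishes at the midpoint of `E_k`);
(iii) hence the vanishing of all three edge means forces `c = 0`, i.e. these
    means form a unisolvent set of degrees of freedom for `P⁴_b(T)`. -/
theorem bubble_edge_gradient_and_unisolvence
    (x : Fin 3 → E2) (hx : AffineIndependent ℝ x)
    (lam : Fin 3 → E2 → ℝ)
    (hlam_aff : ∀ j, ∃ (a : E2) (b : ℝ), lam j = fun p => ⟪a, p⟫ + b)
    (hlam_nodal : ∀ i j, lam j (x i) = if i = j then (1:ℝ) else 0)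
    (hlam_sum : ∀ p, lam 0 p + lam 1 p + lam 2 p = 1)
    (n : Fin 3 → E2)
    (hn : ∀ k, n k ≠ 0 ∧ ⟪n k, x (k+2) - x (k+1)⟫ = 0)
    (c : Fin 3 → ℝ) :
    -- v = Σ_j c_j ψ_j with ψ_j = λ_j λ₀λ₁λ₂
    (∀ k : Fin 3, ∀ p : E2, lam k p = 0 →
      fderiv ℝ (fun q => ∑ j : Fin 3, c j *
          (lam j q * (lam 0 q * lam 1 q * lam 2 q))) p
        = ((c (k+1) * lam (k+1) p + c (k+2) * lam (k+2) p) *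
            (lam (k+1) p * lam (k+2) p)) • fderiv ℝ (lam k) p) ∧
    (∀ k : Fin 3,
      ((∫ t in (0:ℝ)..1,
          fderiv ℝ (fun q => ∑ j : Fin 3, c j *
              (lam j q * (lam 0 q * lam 1 q * lam 2 q)))
            (x (k+1) + t • (x (k+2) - x (k+1))) (n k)) = 0
        ↔ c (k+1) + c (k+2) = 0)) ∧
    ((∀ k : Fin 3,
        (∫ t in (0:ℝ)..1,
          fderiv ℝ (fun q => ∑ j : Fin 3, c j *
              (lam j q * (lam 0 q * lam 1 q * lam 2 q)))
            (x (k+1) + t • (x (k+2) - x (k+1))) (n k)) = 0) →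
      c = 0) := by
  classical
  choose a b hab using hlam_aff
  -- the barycentric coordinates are differentiable with constant gradient `a j`
  have hL : ∀ (j : Fin 3) (p : E2), HasFDerivAt (lam j) (innerSL ℝ (a j)) p := by
    intro j p
    rw [hab j]
    exact ((innerSL ℝ (a j)).hasFDerivAt (x := p)).add_const (b j)
  have hflam : ∀ (j : Fin 3) (p : E2), fderiv ℝ (lam j) p = innerSL ℝ (a j) :=
    fun j p => (hL j p).fderiv
  -- derivative of v everywhere
  have hv : ∀ p : E2,
      HasFDerivAt (fun q => ∑ j : Fin 3, c j * (lam j q * (lam 0 q * lam 1 q * lam 2 q)))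
        (∑ j : Fin 3, c j • (lam j p •
            ((lam 0 p * lam 1 p) • innerSL ℝ (a 2) +
              lam 2 p • (lam 0 p • innerSL ℝ (a 1) + lam 1 p • innerSL ℝ (a 0))) +
            (lam 0 p * lam 1 p * lam 2 p) • innerSL ℝ (a j))) p := by
    intro p
    have hP : HasFDerivAt (fun q => lam 0 q * lam 1 q * lam 2 q)
        ((lam 0 p * lam 1 p) • innerSL ℝ (a 2) +
          lam 2 p • (lam 0 p • innerSL ℝ (a 1) + lam 1 p • innerSL ℝ (a 0))) p :=
      ((hL 0 p).mul (hL 1 p)).mul (hL 2 p)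
    exact HasFDerivAt.fun_sum fun j _ => ((hL j p).mul hP).const_mul (c j)
  -- Part (i)
  have part1 : ∀ k : Fin 3, ∀ p : E2, lam k p = 0 →
      fderiv ℝ (fun q => ∑ j : Fin 3, c j *
          (lam j q * (lam 0 q * lam 1 q * lam 2 q))) p
        = ((c (k+1) * lam (k+1) p + c (k+2) * lam (k+2) p) *
            (lam (k+1) p * lam (k+2) p)) • fderiv ℝ (lam k) p := by
    intro k p hk
    rw [(hv p).fderiv, hflam k p]
    have hk3 : k = 0 ∨ k = 1 ∨ k = 2 := by omega
    ext u
    rcases hk3 with rfl | rfl | rfl <;>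
      simp only [Fin.sum_univ_three, ContinuousLinearMap.add_apply,
        ContinuousLinearMap.coe_smul', Pi.smul_apply, innerSL_apply_apply, smul_eq_mul,
        show ((0:Fin 3)+1) = 1 from rfl, show ((0:Fin 3)+2) = 2 from rfl,
        show ((1:Fin 3)+1) = 2 from rfl, show ((1:Fin 3)+2) = 0 from rfl,
        show ((2:Fin 3)+1) = 0 from rfl, show ((2:Fin 3)+2) = 1 from rfl] <;>
      rw [hk] <;> ring
  -- barycentric coordinates along an edge
  have hedge : ∀ (k : Fin 3) (t : ℝ) (j : Fin 3),
      lam j (x (k+1) + t • (x (k+2) - x (k+1)))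
        = (1-t) * lam j (x (k+1)) + t * lam j (x (k+2)) := by
    intro k t j
    simp only [hab j, inner_add_right, inner_sub_right, real_inner_smul_right]
    ring
  have lamk0 : ∀ (k : Fin 3) (t : ℝ),
      lam k (x (k+1) + t • (x (k+2) - x (k+1))) = 0 := by
    intro k t
    rw [hedge, hlam_nodal, hlam_nodal, if_neg (by omega), if_neg (by omega)]
    ring
  have lam1t : ∀ (k : Fin 3) (t : ℝ),
      lam (k+1) (x (k+1) + t • (x (k+2) - x (k+1))) = 1 - t := by
    intro k t
    rw [hedge, hlam_nodal, hlam_nodal, if_pos rfl, if_neg (by omega)]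
    ring
  have lam2t : ∀ (k : Fin 3) (t : ℝ),
      lam (k+2) (x (k+1) + t • (x (k+2) - x (k+1))) = t := by
    intro k t
    rw [hedge, hlam_nodal, hlam_nodal, if_neg (by omega), if_pos rfl]
    ring
  -- the normal component of the gradient of `lam k` is nonzero
  have hKne : ∀ k : Fin 3, ⟪a k, n k⟫ ≠ 0 := by
    intro k
    have had : ⟪a k, x (k+2) - x (k+1)⟫ = 0 := by
      have e : lam k (x (k+2)) - lam k (x (k+1)) = ⟪a k, x (k+2) - x (k+1)⟫ := by
        simp only [hab k, inner_sub_right]; ring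
      rw [hlam_nodal, hlam_nodal, if_neg (by omega), if_neg (by omega), sub_zero] at e
      exact e.symm
    have hane : a k ≠ 0 := by
      intro h0
      have e : lam k (x k) - lam k (x (k+1)) = ⟪a k, x k - x (k+1)⟫ := by
        simp only [hab k, inner_sub_right]; ring
      rw [hlam_nodal, hlam_nodal, if_pos rfl, if_neg (by omega), h0] at e
      simp at e
    have hdne : x (k+2) - x (k+1) ≠ 0 :=
      sub_ne_zero.mpr fun h => (by omega : (k+2 : Fin 3) ≠ k+1) (hx.injective h)
    exact plane_inner_ne_zero _ _ _ hdne hane (hn k).1 had (hn k).2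
  -- Part (ii)
  have part2 : ∀ k : Fin 3,
      ((∫ t in (0:ℝ)..1,
          fderiv ℝ (fun q => ∑ j : Fin 3, c j *
              (lam j q * (lam 0 q * lam 1 q * lam 2 q)))
            (x (k+1) + t • (x (k+2) - x (k+1))) (n k)) = 0
        ↔ c (k+1) + c (k+2) = 0) := by
    intro k
    have hint : ∀ t : ℝ,
        fderiv ℝ (fun q => ∑ j : Fin 3, c j *
            (lam j q * (lam 0 q * lam 1 q * lam 2 q)))
          (x (k+1) + t • (x (k+2) - x (k+1))) (n k)
        = ((c (k+1)*(1-t) + c (k+2)*t) * ((1-t)*t)) * ⟪a k, n k⟫ := by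
      intro t
      rw [part1 k _ (lamk0 k t), lam1t, lam2t, hflam]
      simp only [ContinuousLinearMap.coe_smul', Pi.smul_apply, innerSL_apply_apply, smul_eq_mul]
    have hval : (∫ t in (0:ℝ)..1,
        fderiv ℝ (fun q => ∑ j : Fin 3, c j *
            (lam j q * (lam 0 q * lam 1 q * lam 2 q)))
          (x (k+1) + t • (x (k+2) - x (k+1))) (n k))
        = ((c (k+1) + c (k+2))/12) * ⟪a k, n k⟫ := by
      rw [intervalIntegral.integral_congr
          (g := fun t : ℝ => ((c (k+1)*(1-t) + c (k+2)*t) * ((1-t)*t)) * ⟪a k, n k⟫)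
          (fun t _ => hint t),
        intervalIntegral.integral_mul_const, bubble_poly_integral]
    rw [hval, mul_eq_zero, or_iff_left (hKne k), div_eq_zero_iff]
    norm_num
  refine ⟨part1, part2, ?_⟩
  -- Part (iii)
  intro hall
  have h0 := (part2 0).mp (hall 0)
  have h1 := (part2 1).mp (hall 1)
  have h2 := (part2 2).mp (hall 2)
  rw [show ((0:Fin 3)+1) = 1 from rfl, show ((0:Fin 3)+2) = 2 from rfl] at h0
  rw [show ((1:Fin 3)+1) = 2 from rfl, show ((1:Fin 3)+2) = 0 from rfl] at h1
  rw [show ((2:Fin 3)+1) = 0 from rfl, show ((2:Fin 3)+2) = 1 from rfl] at h2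
  funext i
  have hi : i = 0 ∨ i = 1 ∨ i = 2 := by omega
  rcases hi with rfl | rfl | rfl <;> simp only [Pi.zero_apply] <;> linarith

end
end

section
/- In the abstract setting, assume (i) H̃(A*,𝒯) = H(A*) (the conforming case) and (ii) the homogeneous Dirichlet boundary condition (trace defined via H₀(A)). Then the Poincaré–Friedrichs inequality ‖v‖ ≤ C_PF‖Av‖ for all v ∈ H₀(A) is equivalent to the inf-sup condition sup_{w∈H(A*),‖w‖_{A*}=1}(A*w, v) ≥ c_is‖v‖ for all v ∈ L²(Ω), in the sense that each implies the other with explicitly related constants: inf-sup implies PF with C_PF = 1/c_is-type dependence via the adjoint problem, and PF implies inf-sup by solving A*𝒞A u_g = g with 𝒞 = identity and taking w = Au_g. -/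
open scoped RealInnerProductSpace

noncomputable section

/-- Abstract Lax–Milgram solve: if the symmetric bilinear form `(Tu, Tv)` is
coercive on the Hilbert space `E`, then for every `g` the problem
`(Tu, Tv) = (g, Sv)` for all `v` has a solution. -/
theorem lax_aux {E F G : Type*}
    [NormedAddCommGroup E] [InnerProductSpace ℝ E] [CompleteSpace E]
    [NormedAddCommGroup F] [InnerProductSpace ℝ F]
    [NormedAddCommGroup G] [InnerProductSpace ℝ G]
    (T : E →L[ℝ] F) (S : E →L[ℝ] G) (g : G)
    (coer : ∃ C > 0, ∀ u : E, C * ‖u‖ * ‖u‖ ≤ ⟪T u, T u⟫) :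
    ∃ u : E, ∀ v : E, ⟪T u, T v⟫ = ⟪g, S v⟫ := by
  obtain ⟨C, hC, hcoer⟩ := coer
  set B : E →L[ℝ] E →L[ℝ] ℝ := ((innerSL ℝ).comp T).flip.comp T with hB
  have hBapp : ∀ u v : E, B u v = ⟪T u, T v⟫ := by
    intro u v
    simp only [hB, ContinuousLinearMap.comp_apply, ContinuousLinearMap.flip_apply,
      innerSL_apply_apply]
    exact real_inner_comm _ _
  have coercive : IsCoercive B := ⟨C, hC, fun u => by rw [hBapp]; exact hcoer u⟩
  set f : E →L[ℝ] ℝ := (innerSL ℝ g).comp S with hf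
  refine ⟨coercive.continuousLinearEquivOfBilin.symm
    ((InnerProductSpace.toDual ℝ E).symm f), fun v => ?_⟩
  rw [← hBapp, ← coercive.continuousLinearEquivOfBilin_apply,
    ContinuousLinearEquiv.apply_symm_apply, InnerProductSpace.toDual_symm_apply]
  simp [hf]

/- STATEMENT 16 (equivalence of Poincaré–Friedrichs (2.4a) and inf-sup (2.4b)
for homogeneous Dirichlet boundary conditions, in the conforming case
`H̃(A*,𝒯) = H(A*)`; cf. the remark after (2.5)).
Abstract setting: `H = L²(Ω)`, `HU = L²(Ω;U)`; `VA` is the graph space of `A`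
(with graph norm, `normVA`), `HA = H(A)` (here `VA` may simply carry `H(A)`
itself, `HA = ⊤`); `VAs` is the graph space of `A*` with `HAs = H(A*)`.
`H₀(A)` membership is `v ∈ HA ∧ ∀ w ∈ HAs, eS v w = 0` (kernel of the boundary
trace `tr_A`).  The hypothesis `hmaxAs` encodes that `A*` is the maximal
adjoint of `A|_{H₀(A)}` (needed for `PF ⟹ inf-sup`: solve `(Au_g, Aδu) = (g, δu)`
with `𝒞 = id` by Lax–Milgram and take `w = A u_g ∈ H(A*)`, `A*w = g`);
`hH0cl` provides the closedness of `H₀(A)` needed for Lax–Milgram.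
Conclusion: `‖v‖ ≤ C_PF ‖Av‖` on `H₀(A)` holds for some `C_PF > 0` iff the
inf-sup condition `sup_{w ∈ H(A*), ‖w‖_{A*}=1} (A*w, g) ≥ c_is ‖g‖` holds for
some `c_is > 0` (with explicitly related constants). -/
theorem poincare_friedrichs_iff_infsup
    {H HU VA VAs : Type*}
    [NormedAddCommGroup H] [InnerProductSpace ℝ H] [CompleteSpace H]
    [NormedAddCommGroup HU] [InnerProductSpace ℝ HU] [CompleteSpace HU]
    [NormedAddCommGroup VA] [InnerProductSpace ℝ VA] [CompleteSpace VA]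
    [NormedAddCommGroup VAs] [InnerProductSpace ℝ VAs] [CompleteSpace VAs]
    (iA : VA →L[ℝ] H) (AT : VA →L[ℝ] HU)
    (iAs : VAs →L[ℝ] HU) (AsT : VAs →L[ℝ] H)
    (normVA : ∀ v : VA, ‖v‖ ^ 2 = ‖iA v‖ ^ 2 + ‖AT v‖ ^ 2)
    (normVAs : ∀ w : VAs, ‖w‖ ^ 2 = ‖iAs w‖ ^ 2 + ‖AsT w‖ ^ 2)
    (HA : Submodule ℝ VA) (hHAcl : IsClosed (HA : Set VA))
    (HAs : Submodule ℝ VAs) (hHAscl : IsClosed (HAs : Set VAs))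
    (hH0cl : IsClosed {v : VA | v ∈ HA ∧ ∀ w ∈ HAs, eS iA AT iAs AsT v w = 0})
    -- A* is the maximal adjoint of A restricted to H₀(A)
    (hmaxAs : ∀ (z : HU) (g : H),
      (∀ v : VA, v ∈ HA → (∀ w ∈ HAs, eS iA AT iAs AsT v w = 0) →
        ⟪z, AT v⟫ = ⟪g, iA v⟫) →
      ∃ w ∈ HAs, iAs w = z ∧ AsT w = g) :
    -- Poincaré–Friedrichs on H₀(A)  ↔  inf-sup for A* on H(A*)
    (∃ CPF > 0, ∀ v : VA, v ∈ HA → (∀ w ∈ HAs, eS iA AT iAs AsT v w = 0) →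
        ‖iA v‖ ≤ CPF * ‖AT v‖)
      ↔ (∃ c_is > 0, ∀ g : H,
          c_is * ‖g‖ ≤ sSup {r : ℝ | ∃ w ∈ HAs, ‖w‖ = 1 ∧ r = ⟪AsT w, g⟫}) := by
  classical
  constructor
  · -- PF ⟹ inf-sup
    rintro ⟨CPF, hCPF, hPF⟩
    refine ⟨(Real.sqrt (CPF ^ 2 + 1))⁻¹, by positivity, fun g => ?_⟩
    have hsqrt : 0 < Real.sqrt (CPF ^ 2 + 1) := Real.sqrt_pos.mpr (by positivity)
    by_cases hg : g = 0
    · subst hg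
      simp only [norm_zero, mul_zero]
      apply Real.sSup_nonneg
      rintro r ⟨w, -, -, rfl⟩
      simp
    have hg' : 0 < ‖g‖ := norm_pos_iff.mpr hg
    -- the subspace H₀(A)
    let H0 : Submodule ℝ VA :=
      { carrier := {v : VA | v ∈ HA ∧ ∀ w ∈ HAs, eS iA AT iAs AsT v w = 0}
        add_mem' := by
          rintro a b ⟨ha, ha'⟩ ⟨hb, hb'⟩
          refine ⟨HA.add_mem ha hb, fun w hw => ?_⟩
          have h1 := ha' w hw; have h2 := hb' w hw
          simp only [eS, map_add, inner_add_right] at *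
          linarith
        zero_mem' := ⟨HA.zero_mem, fun w hw => by simp [eS]⟩
        smul_mem' := by
          rintro c a ⟨ha, ha'⟩
          refine ⟨HA.smul_mem c ha, fun w hw => ?_⟩
          have h1 := ha' w hw
          simp only [eS, map_smul, inner_smul_right] at *
          linear_combination c * h1 }
    have hH0cl' : IsClosed (H0 : Set VA) := hH0cl
    haveI : CompleteSpace H0 := hH0cl'.completeSpace_coe
    -- coercivity from PF
    have hcoer : ∃ C > 0, ∀ u : H0,
        C * ‖u‖ * ‖u‖ ≤ ⟪(AT.comp H0.subtypeL) u, (AT.comp H0.subtypeL) u⟫ := by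
      refine ⟨(CPF ^ 2 + 1)⁻¹, by positivity, fun u => ?_⟩
      have h1 : ‖iA (u : VA)‖ ≤ CPF * ‖AT (u : VA)‖ := hPF _ u.2.1 u.2.2
      have h2 : ‖(u : VA)‖ ^ 2 = ‖iA (u : VA)‖ ^ 2 + ‖AT (u : VA)‖ ^ 2 := normVA _
      have h3 : ⟪(AT.comp H0.subtypeL) u, (AT.comp H0.subtypeL) u⟫
          = ‖AT (u : VA)‖ ^ 2 := by
        simp only [ContinuousLinearMap.comp_apply, Submodule.subtypeL_apply]
        exact real_inner_self_eq_norm_sq _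
      have h4 : ‖u‖ = ‖(u : VA)‖ := rfl
      have h5 : ‖(u : VA)‖ ^ 2 ≤ (CPF ^ 2 + 1) * ‖AT (u : VA)‖ ^ 2 := by
        nlinarith [norm_nonneg (iA (u : VA)), norm_nonneg (AT (u : VA))]
      have h6 : (0:ℝ) < CPF ^ 2 + 1 := by positivity
      rw [h3, h4]
      have h7 := mul_le_mul_of_nonneg_left h5 (inv_pos.mpr h6).le
      calc (CPF ^ 2 + 1)⁻¹ * ‖(u : VA)‖ * ‖(u : VA)‖
          = (CPF ^ 2 + 1)⁻¹ * ‖(u : VA)‖ ^ 2 := by ring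
        _ ≤ (CPF ^ 2 + 1)⁻¹ * ((CPF ^ 2 + 1) * ‖AT (u : VA)‖ ^ 2) := h7
        _ = ‖AT (u : VA)‖ ^ 2 := by field_simp
    -- solve (Au, Aδu) = (g, δu) on H₀ by Lax–Milgram
    obtain ⟨u, hsolve0⟩ := lax_aux (AT.comp H0.subtypeL) (iA.comp H0.subtypeL) g hcoer
    have hsolve : ∀ δu : H0, ⟪AT (u : VA), AT (δu : VA)⟫ = ⟪g, iA (δu : VA)⟫ := by
      intro δu
      have := hsolve0 δu
      simpa only [ContinuousLinearMap.comp_apply, Submodule.subtypeL_apply] using this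
    -- apply maximality of A* to get w ∈ H(A*) with iAs w = Au, A* w = g
    obtain ⟨w, hwmem, hw1, hw2⟩ := hmaxAs (AT (u : VA)) g (by
      intro v hv hv'
      exact hsolve ⟨v, hv, hv'⟩)
    -- bound ‖A u‖ ≤ CPF ‖g‖
    have hATu : ‖AT (u : VA)‖ ≤ CPF * ‖g‖ := by
      have h1 := hsolve u
      rw [real_inner_self_eq_norm_sq] at h1
      have h2 : ⟪g, iA (u : VA)⟫ ≤ ‖g‖ * ‖iA (u : VA)‖ := real_inner_le_norm _ _
      have h3 : ‖iA (u : VA)‖ ≤ CPF * ‖AT (u : VA)‖ := hPF _ u.2.1 u.2.2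
      by_cases h0 : ‖AT (u : VA)‖ = 0
      · rw [h0]; positivity
      · have h0' : 0 < ‖AT (u : VA)‖ := lt_of_le_of_ne (norm_nonneg _) (Ne.symm h0)
        nlinarith [norm_nonneg g]
    -- bound ‖w‖ ≤ sqrt(CPF²+1) ‖g‖
    have hwnorm : ‖w‖ ≤ Real.sqrt (CPF ^ 2 + 1) * ‖g‖ := by
      have h1 : ‖w‖ ^ 2 = ‖iAs w‖ ^ 2 + ‖AsT w‖ ^ 2 := normVAs w
      rw [hw1, hw2] at h1
      have h2 : ‖w‖ ^ 2 ≤ (CPF ^ 2 + 1) * ‖g‖ ^ 2 := by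
        nlinarith [norm_nonneg (AT (u : VA)), norm_nonneg g]
      calc ‖w‖ = Real.sqrt (‖w‖ ^ 2) := (Real.sqrt_sq (norm_nonneg w)).symm
        _ ≤ Real.sqrt ((CPF ^ 2 + 1) * ‖g‖ ^ 2) := Real.sqrt_le_sqrt h2
        _ = Real.sqrt (CPF ^ 2 + 1) * ‖g‖ := by
            rw [Real.sqrt_mul (by positivity), Real.sqrt_sq (norm_nonneg g)]
    have hwne : w ≠ 0 := by
      intro h
      rw [h, map_zero] at hw2
      exact hg hw2.symm
    have hwpos : 0 < ‖w‖ := norm_pos_iff.mpr hwne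
    -- the candidate set is bounded above by ‖g‖
    have hbdd : BddAbove {r : ℝ | ∃ w ∈ HAs, ‖w‖ = 1 ∧ r = ⟪AsT w, g⟫} := by
      refine ⟨‖g‖, ?_⟩
      rintro r ⟨w', hw', hw'n, rfl⟩
      calc ⟪AsT w', g⟫ ≤ ‖AsT w'‖ * ‖g‖ := real_inner_le_norm _ _
        _ ≤ ‖w'‖ * ‖g‖ := by
            have h1 : ‖w'‖ ^ 2 = ‖iAs w'‖ ^ 2 + ‖AsT w'‖ ^ 2 := normVAs w'
            have h2 : ‖AsT w'‖ ≤ ‖w'‖ := by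
              nlinarith [norm_nonneg (iAs w'), norm_nonneg (AsT w'), norm_nonneg w']
            exact mul_le_mul_of_nonneg_right h2 (norm_nonneg g)
        _ = ‖g‖ := by rw [hw'n, one_mul]
    -- the normalized test element w/‖w‖
    have hmem : (‖w‖⁻¹ * ‖g‖ ^ 2) ∈ {r : ℝ | ∃ w ∈ HAs, ‖w‖ = 1 ∧ r = ⟪AsT w, g⟫} := by
      refine ⟨‖w‖⁻¹ • w, HAs.smul_mem _ hwmem, ?_, ?_⟩
      · rw [norm_smul, norm_inv, norm_norm, inv_mul_cancel₀ hwpos.ne']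
      · rw [map_smul, real_inner_smul_left, hw2, real_inner_self_eq_norm_sq]
    calc (Real.sqrt (CPF ^ 2 + 1))⁻¹ * ‖g‖ ≤ ‖w‖⁻¹ * ‖g‖ ^ 2 := by
          rw [show ‖w‖⁻¹ * ‖g‖ ^ 2 = ‖g‖ ^ 2 / ‖w‖ by ring, le_div_iff₀ hwpos]
          have hs : (Real.sqrt (CPF ^ 2 + 1))⁻¹ * Real.sqrt (CPF ^ 2 + 1) = 1 :=
            inv_mul_cancel₀ hsqrt.ne'
          nlinarith [mul_le_mul_of_nonneg_left hwnorm
            (show (0:ℝ) ≤ (Real.sqrt (CPF ^ 2 + 1))⁻¹ * ‖g‖ by positivity)]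
      _ ≤ sSup {r : ℝ | ∃ w ∈ HAs, ‖w‖ = 1 ∧ r = ⟪AsT w, g⟫} := le_csSup hbdd hmem
  · -- inf-sup ⟹ PF
    rintro ⟨c, hc, hinf⟩
    refine ⟨c⁻¹, by positivity, fun v hv hv' => ?_⟩
    have key : sSup {r : ℝ | ∃ w ∈ HAs, ‖w‖ = 1 ∧ r = ⟪AsT w, iA v⟫} ≤ ‖AT v‖ := by
      apply Real.sSup_le _ (norm_nonneg _)
      rintro r ⟨w, hw, hwn, rfl⟩
      have htr := hv' w hw
      simp only [eS, sub_eq_zero] at htr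
      rw [htr]
      calc ⟪iAs w, AT v⟫ ≤ ‖iAs w‖ * ‖AT v‖ := real_inner_le_norm _ _
        _ ≤ ‖w‖ * ‖AT v‖ := by
            have h1 : ‖w‖ ^ 2 = ‖iAs w‖ ^ 2 + ‖AsT w‖ ^ 2 := normVAs w
            have h2 : ‖iAs w‖ ≤ ‖w‖ := by
              nlinarith [norm_nonneg (iAs w), norm_nonneg (AsT w), norm_nonneg w]
            exact mul_le_mul_of_nonneg_right h2 (norm_nonneg _)
        _ = ‖AT v‖ := by rw [hwn, one_mul]
    have h1 := (hinf (iA v)).trans key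
    calc ‖iA v‖ = c⁻¹ * (c * ‖iA v‖) := by field_simp
      _ ≤ c⁻¹ * ‖AT v‖ := mul_le_mul_of_nonneg_left h1 (by positivity)

end
end

section
/- In the abstract ultraweak setting, the operator B : 𝒰 → 𝒱* induced by the bilinear form b((u,w,φ,ψ),(δu,δw)) = (𝒞⁻¹w, δw) − (u, A*δw)_𝒯 − ⟨φ, δw⟩_𝒮 − (w, Aδu)_𝒯 − ⟨ψ, δu⟩_𝒮 has injective adjoint: if (δu, δw) ∈ H̃(A,𝒯) × H̃(A*,𝒯) satisfies b(x, (δu,δw)) = 0 for all x ∈ 𝒰, then δu = 0 and δw = 0. Specifically, vanishing against the trace variables forces δw ∈ H(A*) and δu ∈ H₀(A); vanishing against (u, w) then yields A*δw = 0 and 𝒞⁻¹δw = Aδu, hence A*𝒞Aδu = 0, so by the Poincaré–Friedrichs inequality δu = 0 and δw = 0. -/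
open scoped RealInnerProductSpace

noncomputable section

/- STATEMENT 17 (injectivity of the adjoint of the ultraweak operator `B`;
the injectivity step in the proof of Theorem 2.7).
Abstract ultraweak setting (cf. Statement 7): trial space
`𝒰 = L²(Ω) × L²(Ω;U) × H₀(A,𝒮) × H(A*,𝒮)`, test space
`𝒱 = H̃(A,𝒯) × H̃(A*,𝒯)`; `H = L²(Ω)`, `HU = L²(Ω;U)`, `HA = H(A)`,
`HAs = H(A*)`, `HtA = H̃(A,𝒯)`, `HtAs = H̃(A*,𝒯)`; `H₀(A)` membership is
`v ∈ HA ∧ ∀ w ∈ HAs, eS v w = 0`; a trace `φ ∈ H₀(A,𝒮)` is represented by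
`u0 ∈ H₀(A)` with `⟨φ, δw⟩_𝒮 = - eS u0 δw`, and `ψ ∈ H(A*,𝒮)` by `w0 ∈ H(A*)`
with `⟨ψ, δu⟩_𝒮 = eS δu w0`.  `Ci = 𝒞⁻¹` is symmetric positive definite.
Hypotheses: the two regularity characterizations of Lemma 4.2 (`hcharA`,
`hcharAs`), the Poincaré–Friedrichs inequality (2.4a) and the graph-norm
identities.  Conclusion: if `(δu, δw) ∈ 𝒱` annihilates `b(·, (δu,δw))` for all
trial functions, then `δu = 0` and `δw = 0`. -/
theorem ultraweak_adjoint_injective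
    {H HU VA VAs : Type*}
    [NormedAddCommGroup H] [InnerProductSpace ℝ H]
    [NormedAddCommGroup HU] [InnerProductSpace ℝ HU]
    [NormedAddCommGroup VA] [InnerProductSpace ℝ VA]
    [NormedAddCommGroup VAs] [InnerProductSpace ℝ VAs]
    (iA : VA →L[ℝ] H) (AT : VA →L[ℝ] HU)
    (iAs : VAs →L[ℝ] HU) (AsT : VAs →L[ℝ] H)
    (normVA : ∀ v : VA, ‖v‖ ^ 2 = ‖iA v‖ ^ 2 + ‖AT v‖ ^ 2)
    (normVAs : ∀ w : VAs, ‖w‖ ^ 2 = ‖iAs w‖ ^ 2 + ‖AsT w‖ ^ 2)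
    (HA : Submodule ℝ VA) (HAs : Submodule ℝ VAs)
    (HtA : Submodule ℝ VA) (HtAs : Submodule ℝ VAs)
    (hsub : ∀ v ∈ HA, (∀ w ∈ HAs, eS iA AT iAs AsT v w = 0) → v ∈ HtA)
    (hsubs : HAs ≤ HtAs)
    -- 𝒞⁻¹ symmetric positive definite
    (Ci : HU →L[ℝ] HU) (hCisym : ∀ x y : HU, ⟪Ci x, y⟫ = ⟪x, Ci y⟫)
    (ci : ℝ) (hci : 0 < ci) (hCicoer : ∀ x : HU, ci * ‖x‖ ^ 2 ≤ ⟪Ci x, x⟫)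
    -- Lemma 4.2: vanishing against all ψ ∈ H(A*,𝒮) forces δu ∈ H₀(A)
    (hcharA : ∀ δu ∈ HtA, (∀ w0 ∈ HAs, eS iA AT iAs AsT δu w0 = 0) →
      δu ∈ HA ∧ ∀ w0 ∈ HAs, eS iA AT iAs AsT δu w0 = 0)
    -- Lemma 4.2: vanishing against all φ ∈ H₀(A,𝒮) forces δw ∈ H(A*)
    (hcharAs : ∀ δw ∈ HtAs,
      (∀ u0 : VA, u0 ∈ HA → (∀ w ∈ HAs, eS iA AT iAs AsT u0 w = 0) →
        eS iA AT iAs AsT u0 δw = 0) → δw ∈ HAs)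
    -- Poincaré–Friedrichs (2.4a)
    (CPF : ℝ) (hCPF : 0 < CPF)
    (hPF : ∀ v : VA, v ∈ HA → (∀ w ∈ HAs, eS iA AT iAs AsT v w = 0) →
      ‖iA v‖ ≤ CPF * ‖AT v‖) :
    ∀ δu ∈ HtA, ∀ δw ∈ HtAs,
      -- b(x, (δu, δw)) = 0 for every trial function x = (u, w, φ, ψ) ∈ 𝒰
      (∀ (u : H) (w : HU) (u0 : VA) (w0 : VAs),
        u0 ∈ HA → (∀ w' ∈ HAs, eS iA AT iAs AsT u0 w' = 0) → w0 ∈ HAs →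
        ⟪Ci w, iAs δw⟫ - ⟪u, AsT δw⟫ + eS iA AT iAs AsT u0 δw
          - ⟪w, AT δu⟫ - eS iA AT iAs AsT δu w0 = 0) →
      δu = 0 ∧ δw = 0 := by
  intro δu hδu δw hδw hb
  have hzA : ∀ w' ∈ HAs, eS iA AT iAs AsT (0:VA) w' = 0 := by intro w' _; simp [eS]
  -- (1) AsT δw = 0
  have h1 : AsT δw = 0 := by
    have h := hb (AsT δw) 0 0 0 HA.zero_mem hzA HAs.zero_mem
    simp [eS, real_inner_self_eq_norm_sq] at h
    exact h
  -- (2) Ci (iAs δw) = AT δu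
  have h2 : Ci (iAs δw) = AT δu := by
    have key : ∀ w : HU, ⟪w, Ci (iAs δw) - AT δu⟫ = 0 := by
      intro w
      have h := hb 0 w 0 0 HA.zero_mem hzA HAs.zero_mem
      simp [eS] at h
      rw [inner_sub_right, ← hCisym w (iAs δw)]
      linarith [real_inner_comm (Ci w) (iAs δw)]
    have := key (Ci (iAs δw) - AT δu)
    rw [inner_self_eq_zero] at this
    exact sub_eq_zero.mp this
  -- (3) δw ∈ HAs
  have h3 : δw ∈ HAs := by
    apply hcharAs δw hδw
    intro u0 hu0 hu0tr
    have h := hb 0 0 u0 0 hu0 hu0tr HAs.zero_mem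
    simp [eS] at h ⊢
    linarith
  -- (4) δu ∈ H₀(A)
  have h4 : δu ∈ HA ∧ ∀ w0 ∈ HAs, eS iA AT iAs AsT δu w0 = 0 := by
    apply hcharA δu hδu
    intro w0 hw0
    have h := hb 0 0 0 w0 HA.zero_mem hzA hw0
    simp [eS] at h ⊢
    linarith
  -- (5) iAs δw = 0
  have h5 : iAs δw = 0 := by
    have he := h4.2 δw h3
    simp only [eS, h1, inner_zero_left] at he
    have hAT : ⟪iAs δw, AT δu⟫ = 0 := by linarith
    have hc := hCicoer (iAs δw)
    rw [h2] at hc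
    have : ⟪AT δu, iAs δw⟫ = 0 := by rw [real_inner_comm]; exact hAT
    rw [this] at hc
    have hq : ‖iAs δw‖ ^ 2 = 0 := le_antisymm (by nlinarith) (sq_nonneg _)
    have : ‖iAs δw‖ = 0 := by
      have := pow_eq_zero_iff (n := 2) (by norm_num) |>.mp hq
      exact this
    simpa [norm_eq_zero] using this
  -- (6) AT δu = 0
  have h6 : AT δu = 0 := by rw [← h2, h5, map_zero]
  -- conclude
  have hiA : iA δu = 0 := by
    have := hPF δu h4.1 h4.2
    rw [h6] at this
    simp at this
    have : ‖iA δu‖ = 0 := le_antisymm (by simpa using this) (norm_nonneg _)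
    simpa [norm_eq_zero] using this
  constructor
  · have := normVA δu
    rw [hiA, h6] at this
    simp at this
    exact this
  · have := normVAs δw
    rw [h5, h1] at this
    simp at this
    exact this


end
end
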